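/- arXiv:1901.05776 — 6 statements merged into one kernel-verified Lean document; each statement's English description precedes it below -/
import Mathlib

section
/- Let F : ℝ³ → ℝ be convex and differentiable with gradient f := ∇F, and suppose: F(0) = 0 and F(u) > 0 for all u ≠ 0; F(u)/|u|² → ∞ as |u| → ∞; ⟨f(u),u⟩ ≥ 2·F(u) for all u ∈ ℝ³; and whenever u, v ∈ ℝ³ satisfy ⟨f(u),v⟩ = ⟨f(v),u⟩ > 0 one has F(u) − F(v) ≤ (⟨f(u),u⟩² − ⟨f(u),v⟩²)/(2⟨f(u),u⟩). Then for all u, ψ ∈ ℝ³ and all t ≥ 0: ⟨f(u), ((t² − 1)/2)·u + t·ψ⟩ + F(u) − F(t·u + ψ) ≤ 0. -/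
/-!
For `u ≠ 0` put `h s = F (s • u + ψ) - F u - ⟪f u, ((s ^ 2 - 1) / 2) • u + s • ψ⟫`. Then `h 0 ≥ 0`
by `(F4)` and `h s → ∞` by superquadratic growth, so `h` attains its minimum on `[0, ∞)`. At an
interior minimum `s`, `h' s = 0` says exactly that `⟪f w, u⟫ = ⟪f u, w⟫` for `w = s • u + ψ`, which
is the symmetry hypothesis of `(F5)`, and `(F5)` gives `h s ≥ 0`. For `u = 0` the claim reduces to
`f 0 = 0`, as `0` minimizes `F`.
-/

open Filter Set
open scoped RealInnerProductSpace

theorem tendsto_quadratic_atTop {a : ℝ} (ha : 0 < a) (b d : ℝ) :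
    Tendsto (fun s : ℝ => a * s ^ 2 + b * s + d) atTop atTop := by
  have : Tendsto (fun s : ℝ => s * (a * s + b)) atTop atTop :=
    tendsto_id.atTop_mul_atTop₀ (tendsto_atTop_add_const_right _ b (tendsto_id.const_mul_atTop ha))
  exact tendsto_atTop_add_const_right _ d (this.congr fun s => by ring)

theorem nonneg_of_tendsto_atTop_of_isLocalMin {h : ℝ → ℝ} (hcont : Continuous h)
    (htop : Tendsto h atTop atTop) (h0 : 0 ≤ h 0)
    (hmin : ∀ s, 0 < s → IsLocalMin h s → 0 ≤ h s) {t : ℝ} (ht : 0 ≤ t) : 0 ≤ h t := by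
  obtain ⟨T, hT⟩ := eventually_atTop.1 (htop.eventually_ge_atTop 0)
  obtain ⟨s, hs, hsmin⟩ := isCompact_Icc.exists_isMinOn
    (nonempty_Icc.2 (ht.trans (le_max_right T t))) hcont.continuousOn
  have hst : h s ≤ h t := hsmin ⟨ht, le_max_right T t⟩
  suffices 0 ≤ h s by linarith
  rcases hs.1.eq_or_lt with rfl | hs0
  · exact h0
  rcases hs.2.eq_or_lt with rfl | hsT
  · exact hT _ (le_max_left T t)
  exact hmin s hs0 (hsmin.isLocalMin (Icc_mem_nhds hs0 hsT))

section InnerProductSpace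

variable {E : Type*} [NormedAddCommGroup E] [InnerProductSpace ℝ E]

theorem IsLocalMin.hasGradientAt_eq_zero [CompleteSpace E] {F : E → ℝ} {x g : E}
    (h : IsLocalMin F x) (hg : HasGradientAt F g x) : g = 0 := by
  simpa using h.hasFDerivAt_eq_zero hg.hasFDerivAt

theorem hasDerivAt_comp_smul_add [CompleteSpace E] {F : E → ℝ} {f : E → E}
    (hgrad : ∀ v, HasGradientAt F (f v) v) (u ψ : E) (s : ℝ) :
    HasDerivAt (fun s : ℝ => F (s • u + ψ)) ⟪f (s • u + ψ), u⟫ s := by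
  simpa [Function.comp_def] using
    (hgrad _).hasFDerivAt.comp_hasDerivAt s (((hasDerivAt_id s).smul_const u).add_const ψ)

theorem hasDerivAt_inner_quadratic (v u ψ : E) (s : ℝ) :
    HasDerivAt (fun s : ℝ => ⟪v, ((s ^ 2 - 1) / 2) • u + s • ψ⟫) ⟪v, s • u + ψ⟫ s := by
  have hcurve : HasDerivAt (fun s : ℝ => ((s ^ 2 - 1) / 2) • u + s • ψ) (s • u + ψ) s := by
    convert ((((hasDerivAt_pow 2 s).sub_const 1).div_const 2).smul_const u).add
      ((hasDerivAt_id s).smul_const ψ) using 2 <;> simp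
  exact (innerSL ℝ v).hasFDerivAt.comp_hasDerivAt s hcurve

theorem tendsto_sub_quadratic_atTop {F : E → ℝ}
    (hsuperquad : ∀ M : ℝ, ∃ R : ℝ, ∀ v : E, R ≤ ‖v‖ → M ≤ F v / ‖v‖ ^ 2)
    {u : E} (hu : u ≠ 0) (ψ : E) (a b : ℝ) :
    Tendsto (fun s : ℝ => F (s • u + ψ) - (a * s ^ 2 + b * s)) atTop atTop := by
  have hnu : 0 < ‖u‖ := norm_pos_iff.2 hu
  set M := (|a| + 1) / ‖u‖ ^ 2
  have hMu : M * ‖u‖ ^ 2 = |a| + 1 := div_mul_cancel₀ _ (by positivity)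
  obtain ⟨R, hR⟩ := hsuperquad M
  refine tendsto_atTop_mono' _ ?_ (tendsto_quadratic_atTop (a := |a| + 1 - a)
    (by linarith [le_abs_self a]) (-(2 * M * ‖u‖ * ‖ψ‖) - b) (M * ‖ψ‖ ^ 2))
  filter_upwards [eventually_ge_atTop ((max R 1 + ‖ψ‖) / ‖u‖)] with s hs
  have hsu : max R 1 + ‖ψ‖ ≤ s * ‖u‖ := (div_le_iff₀ hnu).1 hs
  have hnorm : s * ‖u‖ - ‖ψ‖ ≤ ‖s • u + ψ‖ := calc
    s * ‖u‖ - ‖ψ‖ ≤ ‖s • u‖ - ‖ψ‖ := by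
      rw [norm_smul, Real.norm_eq_abs]; gcongr; exact le_abs_self s
    _ ≤ ‖s • u + ψ‖ := norm_sub_le_norm_add _ _
  have hF : M * ‖s • u + ψ‖ ^ 2 ≤ F (s • u + ψ) :=
    (le_div_iff₀ (pow_pos (by linarith [le_max_right R 1]) 2)).1
      (hR _ (by linarith [le_max_left R 1]))
  have hsq : M * (s * ‖u‖ - ‖ψ‖) ^ 2 ≤ M * ‖s • u + ψ‖ ^ 2 := by
    gcongr; linarith [le_max_right R 1]
  linear_combination hsq + hF - s ^ 2 * hMu

/-- With `α = ⟪f u, u⟫` and `β = ⟪f u, w⟫`: for `β ≤ 0` this is `(F4)`, and for `β > 0`, `(F5)`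
leaves a slack of `(s α - β)² / (2 α)`. -/
theorem le_sub_of_inner_symm {F : E → ℝ} {f : E → E} (hFnn : ∀ v, 0 ≤ F v)
    (hF4 : ∀ u, 2 * F u ≤ ⟪f u, u⟫)
    (hF5 : ∀ u v, ⟪f u, v⟫ = ⟪f v, u⟫ → 0 < ⟪f u, v⟫ →
      F u - F v ≤ (⟪f u, u⟫ ^ 2 - ⟪f u, v⟫ ^ 2) / (2 * ⟪f u, u⟫))
    {u w : E} (hα : 0 < ⟪f u, u⟫) (hsym : ⟪f u, w⟫ = ⟪f w, u⟫) {s : ℝ} (hs : 0 ≤ s) :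
    s * ⟪f u, w⟫ - (s ^ 2 + 1) / 2 * ⟪f u, u⟫ ≤ F w - F u := by
  rcases le_or_gt ⟪f u, w⟫ 0 with hβ | hβ
  · nlinarith [hFnn w, hF4 u, mul_nonpos_of_nonneg_of_nonpos hs hβ, sq_nonneg s]
  · have h5 := hF5 u w hsym hβ
    rw [le_div_iff₀ (by positivity)] at h5
    nlinarith [sq_nonneg (s * ⟪f u, u⟫ - ⟪f u, w⟫)]

end InnerProductSpace

theorem stmt2_general (F : EuclideanSpace ℝ (Fin 3) → ℝ)
    (f : EuclideanSpace ℝ (Fin 3) → EuclideanSpace ℝ (Fin 3))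
    (hgrad : ∀ u, HasGradientAt F (f u) u)
    (hF0 : F 0 = 0) (hFpos : ∀ u, u ≠ 0 → 0 < F u)
    (hsuperquad : ∀ M : ℝ, ∃ R : ℝ, ∀ u : EuclideanSpace ℝ (Fin 3),
      R ≤ ‖u‖ → M ≤ F u / ‖u‖ ^ 2)
    (hF4 : ∀ u, 2 * F u ≤ ⟪f u, u⟫)
    (hF5 : ∀ u v, ⟪f u, v⟫ = ⟪f v, u⟫ → 0 < ⟪f u, v⟫ →
      F u - F v ≤ (⟪f u, u⟫ ^ 2 - ⟪f u, v⟫ ^ 2) / (2 * ⟪f u, u⟫)) :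
    ∀ (u ψ : EuclideanSpace ℝ (Fin 3)) (t : ℝ), 0 ≤ t →
      ⟪f u, ((t ^ 2 - 1) / 2) • u + t • ψ⟫ + F u - F (t • u + ψ) ≤ 0 := by
  intro u ψ t ht
  have hFnn : ∀ v, 0 ≤ F v := fun v => by
    rcases eq_or_ne v 0 with rfl | hv
    exacts [hF0.ge, (hFpos v hv).le]
  rcases eq_or_ne u 0 with rfl | hu
  · have hf0 : f 0 = 0 := IsLocalMin.hasGradientAt_eq_zero
      (IsMinOn.isLocalMin (fun v _ => by simpa [hF0] using hFnn v) univ_mem) (hgrad 0)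
    simp [hf0, hF0, hFnn ψ]
  have hα : 0 < ⟪f u, u⟫ := by linarith [hFpos u hu, hF4 u]
  set h := fun s : ℝ => F (s • u + ψ) - F u - ⟪f u, ((s ^ 2 - 1) / 2) • u + s • ψ⟫ with hh
  have hderiv (s : ℝ) : HasDerivAt h (⟪f (s • u + ψ), u⟫ - ⟪f u, s • u + ψ⟫) s :=
    ((hasDerivAt_comp_smul_add hgrad u ψ s).sub_const _).sub (hasDerivAt_inner_quadratic _ u ψ s)
  have hinner (s : ℝ) : ⟪f u, ((s ^ 2 - 1) / 2) • u + s • ψ⟫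
      = s * ⟪f u, s • u + ψ⟫ - (s ^ 2 + 1) / 2 * ⟪f u, u⟫ := by
    simp only [inner_add_right, real_inner_smul_right]; ring
  have htop : Tendsto h atTop atTop :=
    (tendsto_atTop_add_const_right _ (⟪f u, u⟫ / 2 - F u)
      (tendsto_sub_quadratic_atTop hsuperquad hu ψ (⟪f u, u⟫ / 2) ⟪f u, ψ⟫)).congr fun s => by
        simp only [hh, inner_add_right, real_inner_smul_right]; ring
  have hmin (s : ℝ) (hs : 0 < s) (hloc : IsLocalMin h s) : 0 ≤ h s := by
    have hsym := sub_eq_zero.1 (hloc.hasDerivAt_eq_zero (hderiv s))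
    simp only [hh, hinner]
    linarith [le_sub_of_inner_symm hFnn hF4 hF5 hα hsym.symm hs.le]
  have h0 : 0 ≤ h 0 := by simp only [hh, hinner, zero_smul, zero_add]; linarith [hFnn ψ, hF4 u]
  have hht : 0 ≤ h t := nonneg_of_tendsto_atTop_of_isLocalMin
    (continuous_iff_continuousAt.2 fun s => (hderiv s).continuousAt) htop h0 hmin ht
  linarith

theorem stmt2 (F : EuclideanSpace ℝ (Fin 3) → ℝ)
    (f : EuclideanSpace ℝ (Fin 3) → EuclideanSpace ℝ (Fin 3))
    (hconv : ConvexOn ℝ Set.univ F)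
    (hgrad : ∀ u, HasGradientAt F (f u) u)
    (hF0 : F 0 = 0) (hFpos : ∀ u, u ≠ 0 → 0 < F u)
    (hsuperquad : ∀ M : ℝ, ∃ R : ℝ, ∀ u : EuclideanSpace ℝ (Fin 3),
      R ≤ ‖u‖ → M ≤ F u / ‖u‖ ^ 2)
    (hF4 : ∀ u, 2 * F u ≤ ⟪f u, u⟫)
    (hF5 : ∀ u v, ⟪f u, v⟫ = ⟪f v, u⟫ → 0 < ⟪f u, v⟫ →
      F u - F v ≤ (⟪f u, u⟫ ^ 2 - ⟪f u, v⟫ ^ 2) / (2 * ⟪f u, u⟫)) :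
    ∀ (u ψ : EuclideanSpace ℝ (Fin 3)) (t : ℝ), 0 ≤ t →
      ⟪f u, ((t ^ 2 - 1) / 2) • u + t • ψ⟫ + F u - F (t • u + ψ) ≤ 0 :=
  stmt2_general F f hgrad hF0 hFpos hsuperquad hF4 hF5
end

section
/- Let Φ : ℝ → [0,∞) be an N-function of class C¹ satisfying the Δ₂- and ∇₂-conditions globally. Let F : ℝ³ × ℝ³ → ℝ be such that F(x,·) is differentiable for a.e. x ∈ ℝ³ with f := ∂_u F a Carathéodory function (measurable in x, continuous in u), F(x,0) = 0, and |f(x,u)| ≤ c₁·Φ'(|u|) for some c₁ > 0, all u ∈ ℝ³ and a.e. x ∈ ℝ³. Let (Eₙ) be a sequence of measurable functions ℝ³ → ℝ³ with sup_n ∫_{ℝ³} Φ(|Eₙ|) dx < ∞ and Eₙ → E a.e. on ℝ³. Then lim_{n→∞} ∫_{ℝ³} (F(x,Eₙ(x)) − F(x,Eₙ(x) − E(x))) dx = ∫_{ℝ³} F(x,E(x)) dx. -/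
open MeasureTheory Filter Topology
open scoped ENNReal

/-!
This is a Brezis–Lieb argument. Put `gₙ = F(Eₙ) - F(Eₙ - E) - F(E)`. The mean value theorem and the
growth bound `|f| ≤ c₁ Φ'` give `|F(a) - F(a - e)| ≤ c₁ Φ'(|a| + |e|) |e|`, while convexity and the
Δ₂-condition give `Φ'(s) s ≤ K Φ(s)` and hence the Young-type inequality
`Φ'(s) r ≤ ε Φ(s) + C_ε Φ(r)`. Therefore `|gₙ| ≤ ε Φ(|Eₙ|) + C'_ε Φ(|E|)` for every `ε > 0`.
As `∫ Φ(|Eₙ|)` is bounded and `Φ(|E|)` is integrable by Fatou, a dominated convergence argument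
gives `∫ |gₙ| → 0`.
-/

theorem aemeasurable_comp_of_ae_continuous {α β γ : Type*} [MeasurableSpace α] {μ : Measure α}
    [MeasurableSpace β] [PseudoEMetricSpace β] [OpensMeasurableSpace β]
    [TopologicalSpace.SeparableSpace β] [MeasurableSpace γ] [TopologicalSpace γ]
    [TopologicalSpace.PseudoMetrizableSpace γ] [BorelSpace γ] {F : α → β → γ}
    (hFmeas : ∀ u, Measurable fun x => F x u) (hFcont : ∀ᵐ x ∂μ, Continuous (F x))
    {g : α → β} (hg : Measurable g) : AEMeasurable (fun x => F x (g x)) μ := by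
  obtain _ | ⟨⟨x₀⟩⟩ := isEmpty_or_nonempty α
  · exact Subsingleton.measurable.aemeasurable
  refine aemeasurable_of_tendsto_metrizable_ae'
    (f := fun k x => F x (SimpleFunc.approxOn g hg Set.univ (g x₀) (Set.mem_univ _) k x))
    (fun k => (SimpleFunc.measurable_bind _ (fun u x => F x u) hFmeas).aemeasurable) ?_
  filter_upwards [hFcont] with x hx
  exact (hx.tendsto (g x)).comp (SimpleFunc.tendsto_approxOn hg (Set.mem_univ _) (by simp))

section ConvexFunction

variable {Φ : ℝ → ℝ} {K : ℝ}

theorem ConvexOn.monotone_deriv (hconv : ConvexOn ℝ Set.univ Φ) (hdiff : Differentiable ℝ Φ) :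
    Monotone (deriv Φ) :=
  monotoneOn_univ.mp (hconv.monotoneOn_deriv fun x _ => hdiff x)

theorem deriv_nonneg_of_isMinOn_zero (hconv : ConvexOn ℝ Set.univ Φ) (hdiff : Differentiable ℝ Φ)
    (hmin : IsMinOn Φ Set.univ 0) {s : ℝ} (hs : 0 ≤ s) : 0 ≤ deriv Φ s :=
  (hmin.isLocalMin Filter.univ_mem).deriv_eq_zero ▸ hconv.monotone_deriv hdiff hs

theorem monotoneOn_Ici_of_isMinOn_zero (hconv : ConvexOn ℝ Set.univ Φ)
    (hdiff : Differentiable ℝ Φ) (hmin : IsMinOn Φ Set.univ 0) : MonotoneOn Φ (Set.Ici 0) := by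
  refine monotoneOn_of_deriv_nonneg (convex_Ici 0) hdiff.continuous.continuousOn
    hdiff.differentiableOn fun x hx => deriv_nonneg_of_isMinOn_zero hconv hdiff hmin ?_
  rw [interior_Ici] at hx
  exact le_of_lt hx

theorem ConvexOn.deriv_mul_le_sub (hconv : ConvexOn ℝ Set.univ Φ) (hdiff : Differentiable ℝ Φ)
    {s : ℝ} (hs : 0 ≤ s) : deriv Φ s * s ≤ Φ (2 * s) - Φ s := by
  rcases hs.eq_or_lt with rfl | hs
  · simp
  have hslope := hconv.deriv_le_slope (Set.mem_univ s) (Set.mem_univ (2 * s)) (by linarith)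
    (hdiff s)
  rwa [slope_def_field, show 2 * s - s = s by ring, le_div_iff₀ hs] at hslope

theorem le_pow_mul_of_forall_two_mul_le (hK0 : 0 ≤ K)
    (hK : ∀ t, Φ (2 * t) ≤ K * Φ t) (j : ℕ) (t : ℝ) : Φ (2 ^ j * t) ≤ K ^ j * Φ t := by
  induction j with
  | zero => simp
  | succ j ih =>
    calc Φ (2 ^ (j + 1) * t) = Φ (2 * (2 ^ j * t)) := by ring_nf
      _ ≤ K * Φ (2 ^ j * t) := hK _
      _ ≤ K * (K ^ j * Φ t) := mul_le_mul_of_nonneg_left ih hK0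
      _ = K ^ (j + 1) * Φ t := by ring

theorem deriv_mul_self_le_of_forall_two_mul_le (hconv : ConvexOn ℝ Set.univ Φ)
    (hdiff : Differentiable ℝ Φ) (hnonneg : ∀ t, 0 ≤ Φ t) (hK : ∀ t, Φ (2 * t) ≤ K * Φ t)
    {s : ℝ} (hs : 0 ≤ s) : deriv Φ s * s ≤ K * Φ s := by
  linarith [hconv.deriv_mul_le_sub hdiff hs, hK s, hnonneg s]

theorem add_le_of_forall_two_mul_le (hmono : MonotoneOn Φ (Set.Ici 0)) (hnonneg : ∀ t, 0 ≤ Φ t)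
    (hK0 : 0 ≤ K) (hK : ∀ t, Φ (2 * t) ≤ K * Φ t) {p q : ℝ} (hp : 0 ≤ p) (hq : 0 ≤ q) :
    Φ (p + q) ≤ K * Φ p + K * Φ q := by
  have hKp := mul_nonneg hK0 (hnonneg p)
  have hKq := mul_nonneg hK0 (hnonneg q)
  rcases le_total p q with h | h
  · linarith [hmono (Set.mem_Ici.2 (add_nonneg hp hq)) (Set.mem_Ici.2 (by linarith : 0 ≤ 2 * q))
      (by linarith : p + q ≤ 2 * q), hK q]
  · linarith [hmono (Set.mem_Ici.2 (add_nonneg hp hq)) (Set.mem_Ici.2 (by linarith : 0 ≤ 2 * p))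
      (by linarith : p + q ≤ 2 * p), hK p]

/-- Young's inequality for the pair `(Φ, Φ')` under the Δ₂-condition: split according to whether
`2 ^ j r ≤ s`, where `2⁻¹ ^ j K < ε`. -/
theorem exists_deriv_mul_le_of_forall_two_mul_le (hconv : ConvexOn ℝ Set.univ Φ)
    (hdiff : Differentiable ℝ Φ) (hnonneg : ∀ t, 0 ≤ Φ t) (hΦ0 : Φ 0 = 0) (hK0 : 0 < K)
    (hK : ∀ t, Φ (2 * t) ≤ K * Φ t) {ε : ℝ} (hε : 0 < ε) :
    ∃ C, ∀ s r, 0 ≤ s → 0 ≤ r → deriv Φ s * r ≤ ε * Φ s + C * Φ r := by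
  have hmin : IsMinOn Φ Set.univ 0 := fun t _ => by simpa [hΦ0] using hnonneg t
  obtain ⟨j, hj⟩ := exists_pow_lt_of_lt_one (div_pos hε hK0) (by norm_num : (2⁻¹ : ℝ) < 1)
  refine ⟨K ^ (j + 1), fun s r hs hr => ?_⟩
  have h2j : (1 : ℝ) ≤ 2 ^ j := one_le_pow₀ (by norm_num)
  have hεs := mul_nonneg hε.le (hnonneg s)
  have hCr := mul_nonneg (pow_nonneg hK0.le (j + 1)) (hnonneg r)
  rcases le_or_gt (2 ^ j * r) s with h | h
  · have hr' : r ≤ 2⁻¹ ^ j * s := by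
      rw [inv_pow, inv_mul_eq_div, le_div_iff₀ (by positivity)]
      linarith
    have hεK : 2⁻¹ ^ j * K ≤ ε := ((lt_div_iff₀ hK0).mp hj).le
    calc deriv Φ s * r ≤ deriv Φ s * (2⁻¹ ^ j * s) :=
          mul_le_mul_of_nonneg_left hr' (deriv_nonneg_of_isMinOn_zero hconv hdiff hmin hs)
      _ = 2⁻¹ ^ j * (deriv Φ s * s) := by ring
      _ ≤ 2⁻¹ ^ j * (K * Φ s) := mul_le_mul_of_nonneg_left
          (deriv_mul_self_le_of_forall_two_mul_le hconv hdiff hnonneg hK hs) (by positivity)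
      _ ≤ ε * Φ s := by
          rw [← mul_assoc]; exact mul_le_mul_of_nonneg_right hεK (hnonneg s)
      _ ≤ ε * Φ s + K ^ (j + 1) * Φ r := by linarith
  · have hrj : 0 ≤ 2 ^ j * r := by positivity
    calc deriv Φ s * r ≤ deriv Φ (2 ^ j * r) * (2 ^ j * r) :=
          mul_le_mul (hconv.monotone_deriv hdiff h.le) (by nlinarith) hr
            (deriv_nonneg_of_isMinOn_zero hconv hdiff hmin hrj)
      _ ≤ K * Φ (2 ^ j * r) :=
          deriv_mul_self_le_of_forall_two_mul_le hconv hdiff hnonneg hK hrj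
      _ ≤ K * (K ^ j * Φ r) :=
          mul_le_mul_of_nonneg_left (le_pow_mul_of_forall_two_mul_le hK0.le hK j r) hK0.le
      _ ≤ ε * Φ s + K ^ (j + 1) * Φ r := by rw [pow_succ]; linarith

end ConvexFunction

section GradientBound

variable {V : Type*} [NormedAddCommGroup V] [InnerProductSpace ℝ V] [CompleteSpace V]
  {Φ : ℝ → ℝ} {c K : ℝ}

theorem abs_sub_le_of_norm_gradient_le {G : V → ℝ} {g : V → V} {ψ : ℝ → ℝ} (hψ : Monotone ψ)
    (hG : ∀ u, HasGradientAt G (g u) u) (hg : ∀ u, ‖g u‖ ≤ ψ ‖u‖) {R : ℝ} {u v : V}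
    (hu : ‖u‖ ≤ R) (hv : ‖v‖ ≤ R) : |G u - G v| ≤ ψ R * ‖u - v‖ := by
  have hball : ∀ w ∈ Metric.closedBall (0 : V) R,
      ‖InnerProductSpace.toDual ℝ V (g w)‖ ≤ ψ R := fun w hw => by
    rw [LinearIsometryEquiv.norm_map]
    exact (hg w).trans (hψ (mem_closedBall_zero_iff.mp hw))
  simpa [Real.norm_eq_abs] using
    (convex_closedBall (0 : V) R).norm_image_sub_le_of_norm_hasFDerivWithin_le
      (fun w _ => (hasGradientAt_iff_hasFDerivAt.mp (hG w)).hasFDerivWithinAt) hball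
      (mem_closedBall_zero_iff.2 hv) (mem_closedBall_zero_iff.2 hu)

theorem abs_le_of_norm_gradient_le {G : V → ℝ} {g : V → V} (hconv : ConvexOn ℝ Set.univ Φ)
    (hdiff : Differentiable ℝ Φ) (hnonneg : ∀ t, 0 ≤ Φ t) (hK : ∀ t, Φ (2 * t) ≤ K * Φ t)
    (hc : 0 ≤ c) (hG : ∀ u, HasGradientAt G (g u) u) (hg : ∀ u, ‖g u‖ ≤ c * deriv Φ ‖u‖)
    (hG0 : G 0 = 0) (u : V) : |G u| ≤ c * K * Φ ‖u‖ := by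
  have h := abs_sub_le_of_norm_gradient_le ((hconv.monotone_deriv hdiff).const_mul hc) hG hg
    le_rfl (by simp : ‖(0 : V)‖ ≤ ‖u‖)
  rw [hG0, sub_zero, sub_zero, mul_assoc] at h
  rw [mul_assoc]
  exact h.trans (mul_le_mul_of_nonneg_left
    (deriv_mul_self_le_of_forall_two_mul_le hconv hdiff hnonneg hK (norm_nonneg u)) hc)

/-- The constants come from `Φ(|a| + |e|) ≤ K Φ(|a|) + K Φ(|e|)`, applied after the Young
inequality `hY` to the mean value bound on the segment from `a - e` to `a`. -/
theorem abs_sub_sub_le_of_norm_gradient_le {G : V → ℝ} {g : V → V}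
    (hconv : ConvexOn ℝ Set.univ Φ) (hdiff : Differentiable ℝ Φ) (hnonneg : ∀ t, 0 ≤ Φ t)
    (hΦ0 : Φ 0 = 0) (hK0 : 0 ≤ K) (hK : ∀ t, Φ (2 * t) ≤ K * Φ t) (hc : 0 ≤ c)
    (hG : ∀ u, HasGradientAt G (g u) u) (hg : ∀ u, ‖g u‖ ≤ c * deriv Φ ‖u‖) (hG0 : G 0 = 0)
    {ε C : ℝ} (hε : 0 ≤ ε)
    (hY : ∀ s r, 0 ≤ s → 0 ≤ r → deriv Φ s * r ≤ ε * Φ s + C * Φ r) (a e : V) :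
    |G a - G (a - e) - G e| ≤
      c * ε * K * Φ ‖a‖ + c * (ε * K + C + K) * Φ ‖e‖ := by
  have hmin : IsMinOn Φ Set.univ 0 := fun t _ => by simpa [hΦ0] using hnonneg t
  have hsub : |G a - G (a - e)| ≤ c * deriv Φ (‖a‖ + ‖e‖) * ‖e‖ := by
    simpa using abs_sub_le_of_norm_gradient_le ((hconv.monotone_deriv hdiff).const_mul hc) hG hg
      (le_add_of_nonneg_right (norm_nonneg e)) (norm_sub_le_of_le le_rfl le_rfl)
  have hadd := add_le_of_forall_two_mul_le (monotoneOn_Ici_of_isMinOn_zero hconv hdiff hmin)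
    hnonneg hK0 hK (norm_nonneg a) (norm_nonneg e)
  have hYae := hY (‖a‖ + ‖e‖) ‖e‖ (by positivity) (norm_nonneg e)
  have hGe := abs_le_of_norm_gradient_le hconv hdiff hnonneg hK hc hG hg hG0 e
  calc |G a - G (a - e) - G e| ≤ |G a - G (a - e)| + |G e| := abs_sub _ _
    _ ≤ c * (deriv Φ (‖a‖ + ‖e‖) * ‖e‖) + c * K * Φ ‖e‖ := by linarith
    _ ≤ c * (ε * (K * Φ ‖a‖ + K * Φ ‖e‖) + C * Φ ‖e‖) + c * K * Φ ‖e‖ := by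
        gcongr
        exact hYae.trans (by gcongr)
    _ = c * ε * K * Φ ‖a‖ + c * (ε * K + C + K) * Φ ‖e‖ := by ring

theorem exists_forall_abs_sub_sub_le_of_norm_gradient_le (hconv : ConvexOn ℝ Set.univ Φ)
    (hdiff : Differentiable ℝ Φ) (hnonneg : ∀ t, 0 ≤ Φ t) (hΦ0 : Φ 0 = 0) (hK0 : 0 < K)
    (hK : ∀ t, Φ (2 * t) ≤ K * Φ t) (hc : 0 < c) {ε : ℝ} (hε : 0 < ε) :
    ∃ C, ∀ G : V → ℝ, ∀ g : V → V, (∀ u, HasGradientAt G (g u) u) →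
      (∀ u, ‖g u‖ ≤ c * deriv Φ ‖u‖) → G 0 = 0 →
      ∀ a e, |G a - G (a - e) - G e| ≤ ε * Φ ‖a‖ + C * Φ ‖e‖ := by
  obtain ⟨C, hY⟩ := exists_deriv_mul_le_of_forall_two_mul_le hconv hdiff hnonneg hΦ0 hK0 hK
    (ε := ε / (c * K)) (by positivity)
  refine ⟨c * (ε / (c * K) * K + C + K), fun G g hG hg hG0 a e => ?_⟩
  have h := abs_sub_sub_le_of_norm_gradient_le hconv hdiff hnonneg hΦ0 hK0.le hK hc.le hG hg hG0
    (by positivity) hY a e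
  rwa [show c * (ε / (c * K)) * K = ε by field_simp] at h

end GradientBound

section Convergence

variable {α E : Type*} [MeasurableSpace α] {μ : Measure α} [NormedAddCommGroup E]

theorem integrable_of_tendsto_of_lintegral_ofReal_le {u : ℕ → α → ℝ} {v : α → ℝ}
    (hu : ∀ n, AEMeasurable (u n) μ) (hv : AEStronglyMeasurable v μ) (hv0 : 0 ≤ᵐ[μ] v)
    (hlim : ∀ᵐ x ∂μ, Tendsto (fun n => u n x) atTop (𝓝 (v x))) {C : ℝ≥0∞} (hC : C < ∞)
    (hbound : ∀ n, ∫⁻ x, ENNReal.ofReal (u n x) ∂μ ≤ C) : Integrable v μ := by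
  refine (lintegral_ofReal_ne_top_iff_integrable hv hv0).mp (ne_top_of_le_ne_top hC.ne ?_)
  calc ∫⁻ x, ENNReal.ofReal (v x) ∂μ
      = ∫⁻ x, liminf (fun n => ENNReal.ofReal (u n x)) atTop ∂μ := by
        refine lintegral_congr_ae ?_
        filter_upwards [hlim] with x hx
        exact ((ENNReal.continuous_ofReal.tendsto _).comp hx).liminf_eq.symm
    _ ≤ liminf (fun n => ∫⁻ x, ENNReal.ofReal (u n x) ∂μ) atTop :=
        lintegral_liminf_le' fun n => ENNReal.measurable_ofReal.comp_aemeasurable (hu n)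
    _ ≤ C := liminf_le_of_frequently_le' (Frequently.of_forall hbound)

/-- `‖gₙ‖ ≤ min (‖gₙ‖, ‖C H‖) + ε hₙ`, and the first term tends to `0` in `L¹` by dominated
convergence. -/
theorem tendsto_integral_norm_zero_of_forall_norm_le {g : ℕ → α → E} {h : ℕ → α → ℝ}
    {H : α → ℝ} {M : ℝ} (hg : ∀ n, AEStronglyMeasurable (g n) μ) (hh : ∀ n, Integrable (h n) μ)
    (hh0 : ∀ n, 0 ≤ᵐ[μ] h n) (hM : ∀ n, ∫ x, h n x ∂μ ≤ M) (hH : Integrable H μ)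
    (hlim : ∀ᵐ x ∂μ, Tendsto (fun n => g n x) atTop (𝓝 0))
    (hdom : ∀ ε > 0, ∃ C, ∀ n, ∀ᵐ x ∂μ, ‖g n x‖ ≤ ε * h n x + C * H x) :
    Tendsto (fun n => ∫ x, ‖g n x‖ ∂μ) atTop (𝓝 0) := by
  refine tendsto_order.2 ⟨fun δ hδ => Eventually.of_forall fun n =>
    hδ.trans_le (integral_nonneg fun _ => norm_nonneg _), fun δ hδ => ?_⟩
  obtain ⟨ε, hε, hεM⟩ := exists_pos_mul_lt (half_pos hδ) M
  obtain ⟨C, hC⟩ := hdom ε hε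
  have hCH : Integrable (fun x => ‖C * H x‖) μ := (hH.const_mul C).norm
  have hmin_le : ∀ n x, ‖min ‖g n x‖ ‖C * H x‖‖ ≤ ‖C * H x‖ := fun n x => by
    rw [Real.norm_of_nonneg (le_min (norm_nonneg _) (norm_nonneg _))]
    exact min_le_right _ _
  have hmin_int : ∀ n, Integrable (fun x => min ‖g n x‖ ‖C * H x‖) μ := fun n =>
    hCH.mono' ((hg n).norm.inf hCH.aestronglyMeasurable) (ae_of_all _ (hmin_le n))
  have hmin_lim : Tendsto (fun n => ∫ x, min ‖g n x‖ ‖C * H x‖ ∂μ) atTop (𝓝 0) := by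
    simpa only [integral_zero] using tendsto_integral_of_dominated_convergence (f := fun _ => 0)
      (fun x => ‖C * H x‖)
      (fun n => (hmin_int n).aestronglyMeasurable) hCH
      (fun n => ae_of_all _ (hmin_le n))
      (by
        filter_upwards [hlim] with x hx
        exact squeeze_zero (fun n => le_min (norm_nonneg _) (norm_nonneg _))
          (fun n => min_le_left _ _) (by simpa using hx.norm))
  have hsplit : ∀ n, ∫ x, ‖g n x‖ ∂μ ≤ ∫ x, min ‖g n x‖ ‖C * H x‖ ∂μ + ε * M := fun n => by
    have hgi : Integrable (fun x => ‖g n x‖) μ :=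
      (((hh n).const_mul ε).add (hH.const_mul C)).mono' (hg n).norm
        (by filter_upwards [hC n] with x hx; simpa using hx)
    calc ∫ x, ‖g n x‖ ∂μ ≤ ∫ x, (min ‖g n x‖ ‖C * H x‖ + ε * h n x) ∂μ := by
          refine integral_mono_ae hgi ((hmin_int n).add ((hh n).const_mul ε)) ?_
          filter_upwards [hC n, hh0 n] with x hx hx0
          rcases le_total ‖g n x‖ ‖C * H x‖ with hle | hle
          · rw [min_eq_left hle]
            linarith [mul_nonneg hε.le hx0]
          · rw [min_eq_right hle]
            linarith [Real.le_norm_self (C * H x)]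
      _ = ∫ x, min ‖g n x‖ ‖C * H x‖ ∂μ + ε * ∫ x, h n x ∂μ := by
          rw [integral_add (hmin_int n) ((hh n).const_mul ε), integral_const_mul]
      _ ≤ ∫ x, min ‖g n x‖ ‖C * H x‖ ∂μ + ε * M := by gcongr; exact hM n
  filter_upwards [hmin_lim.eventually_lt_const (by linarith : (0 : ℝ) < δ / 2)] with n hn
  linarith [hsplit n, mul_comm M ε]

theorem tendsto_integral_of_forall_norm_sub_le [NormedSpace ℝ E] [CompleteSpace E]
    {φ : ℕ → α → E} {ψ : α → E} {h : ℕ → α → ℝ} {H : α → ℝ} {C : ℝ≥0∞}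
    (hφ : ∀ n, AEStronglyMeasurable (φ n) μ) (hψ : Integrable ψ μ)
    (hh : ∀ n, AEStronglyMeasurable (h n) μ) (hh0 : ∀ n, 0 ≤ᵐ[μ] h n)
    (hbound : ∀ n, ∫⁻ x, ENNReal.ofReal (h n x) ∂μ ≤ C) (hC : C < ∞) (hH : Integrable H μ)
    (hlim : ∀ᵐ x ∂μ, Tendsto (fun n => φ n x) atTop (𝓝 (ψ x)))
    (hdom : ∀ ε > 0, ∃ C', ∀ n, ∀ᵐ x ∂μ, ‖φ n x - ψ x‖ ≤ ε * h n x + C' * H x) :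
    Tendsto (fun n => ∫ x, φ n x ∂μ) atTop (𝓝 (∫ x, ψ x ∂μ)) := by
  have hh_int : ∀ n, Integrable (h n) μ := fun n =>
    (lintegral_ofReal_ne_top_iff_integrable (hh n) (hh0 n)).mp ((hbound n).trans_lt hC).ne
  have hh_le : ∀ n, ∫ x, h n x ∂μ ≤ C.toReal := fun n => by
    rw [integral_eq_lintegral_of_nonneg_ae (hh0 n) (hh n)]
    exact ENNReal.toReal_mono hC.ne (hbound n)
  have hsub_int : ∀ n, Integrable (fun x => φ n x - ψ x) μ := fun n => by
    obtain ⟨C', hC'⟩ := hdom 1 one_pos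
    exact (((hh_int n).const_mul 1).add (hH.const_mul C')).mono' ((hφ n).sub hψ.1) (hC' n)
  have hL1 := tendsto_integral_norm_zero_of_forall_norm_le (fun n => (hφ n).sub hψ.1) hh_int hh0
    hh_le hH (hlim.mono fun x hx => by simpa using hx.sub_const (ψ x)) hdom
  have hsplit : ∀ n, ∫ x, φ n x ∂μ = (∫ x, (φ n x - ψ x) ∂μ) + ∫ x, ψ x ∂μ := fun n => by
    rw [← integral_add (hsub_int n) hψ]
    simp only [sub_add_cancel]
  simpa only [hsplit, zero_add] using
    (squeeze_zero_norm (fun n => norm_integral_le_integral_norm (fun x => φ n x - ψ x))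
      hL1).add_const (∫ x, ψ x ∂μ)

end Convergence

theorem stmt3_general (Φ : ℝ → ℝ) (hC1 : ContDiff ℝ 1 Φ)
    (hconv : ConvexOn ℝ Set.univ Φ)
    (hnonneg : ∀ t, 0 ≤ Φ t) (hzero : ∀ t, Φ t = 0 ↔ t = 0)
    (hDelta2 : ∃ K : ℝ, 1 < K ∧ ∀ t : ℝ, Φ (2 * t) ≤ K * Φ t)
    (F : EuclideanSpace ℝ (Fin 3) → EuclideanSpace ℝ (Fin 3) → ℝ)
    (f : EuclideanSpace ℝ (Fin 3) → EuclideanSpace ℝ (Fin 3) → EuclideanSpace ℝ (Fin 3))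
    (hFmeas : ∀ u, Measurable (fun x => F x u))
    (hgrad : ∀ᵐ x, ∀ u, HasGradientAt (F x) (f x u) u)
    (hF0 : ∀ᵐ x, F x 0 = 0)
    (c₁ : ℝ) (hc₁ : 0 < c₁)
    (hgrowth : ∀ᵐ x, ∀ u, ‖f x u‖ ≤ c₁ * deriv Φ ‖u‖)
    (Eseq : ℕ → EuclideanSpace ℝ (Fin 3) → EuclideanSpace ℝ (Fin 3))
    (Elim : EuclideanSpace ℝ (Fin 3) → EuclideanSpace ℝ (Fin 3))
    (hEmeas : ∀ n, Measurable (Eseq n)) (hElimmeas : Measurable Elim)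
    (C : ℝ≥0∞) (hC : C < ⊤)
    (hbound : ∀ n, (∫⁻ x, ENNReal.ofReal (Φ ‖Eseq n x‖)) ≤ C)
    (hae : ∀ᵐ x, Tendsto (fun n => Eseq n x) atTop (𝓝 (Elim x))) :
    Tendsto (fun n => ∫ x, (F x (Eseq n x) - F x (Eseq n x - Elim x))) atTop
      (𝓝 (∫ x, F x (Elim x))) := by
  obtain ⟨K, hK1, hK⟩ := hDelta2
  have hdiff : Differentiable ℝ Φ := hC1.differentiable one_ne_zero
  have hFcont : ∀ᵐ x, Continuous (F x) := hgrad.mono fun x hx =>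
    continuous_iff_continuousAt.2 fun u => (hx u).differentiableAt.continuousAt
  have hF_meas : ∀ {u : EuclideanSpace ℝ (Fin 3) → EuclideanSpace ℝ (Fin 3)}, Measurable u →
      AEStronglyMeasurable (fun x => F x (u x)) := fun hu =>
    (aemeasurable_comp_of_ae_continuous hFmeas hFcont hu).aestronglyMeasurable
  have hΦ_meas : ∀ {u : EuclideanSpace ℝ (Fin 3) → EuclideanSpace ℝ (Fin 3)}, Measurable u →
      AEStronglyMeasurable (fun x => Φ ‖u x‖) := fun hu =>
    (hdiff.continuous.measurable.comp hu.norm).aestronglyMeasurable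
  have hΦElim : Integrable fun x => Φ ‖Elim x‖ :=
    integrable_of_tendsto_of_lintegral_ofReal_le (fun n => (hΦ_meas (hEmeas n)).aemeasurable)
      (hΦ_meas hElimmeas) (ae_of_all _ fun _ => hnonneg _)
      (hae.mono fun x hx => (hdiff.continuous.tendsto _).comp hx.norm) hC hbound
  have hFElim : Integrable fun x => F x (Elim x) :=
    (hΦElim.const_mul (c₁ * K)).mono' (hF_meas hElimmeas) (by
      filter_upwards [hgrad, hgrowth, hF0] with x hgradx hgrowthx hF0x
      exact abs_le_of_norm_gradient_le hconv hdiff hnonneg hK hc₁.le hgradx hgrowthx hF0x _)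
  refine tendsto_integral_of_forall_norm_sub_le
    (φ := fun n x => F x (Eseq n x) - F x (Eseq n x - Elim x))
    (fun n => (hF_meas (hEmeas n)).sub (hF_meas ((hEmeas n).sub hElimmeas))) hFElim
    (fun n => hΦ_meas (hEmeas n)) (fun _ => ae_of_all _ fun _ => hnonneg _) hbound hC hΦElim ?_
    fun ε hε => ?_
  · filter_upwards [hFcont, hF0, hae] with x hcont hF0x hx
    simpa [hF0x] using ((hcont.tendsto _).comp hx).sub
      ((hcont.tendsto _).comp (hx.sub_const (Elim x)))
  · obtain ⟨C', hC'⟩ := exists_forall_abs_sub_sub_le_of_norm_gradient_le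
      (V := EuclideanSpace ℝ (Fin 3)) hconv hdiff hnonneg ((hzero 0).mpr rfl) (one_pos.trans hK1)
      hK hc₁ hε
    exact ⟨C', fun n => by filter_upwards [hgrad, hgrowth, hF0] with x hgradx hgrowthx hF0x
      using (Real.norm_eq_abs _).trans_le (hC' _ _ hgradx hgrowthx hF0x _ _)⟩

theorem stmt3 (Φ : ℝ → ℝ) (hC1 : ContDiff ℝ 1 Φ)
    (hconv : ConvexOn ℝ Set.univ Φ) (heven : ∀ t, Φ (-t) = Φ t)
    (hnonneg : ∀ t, 0 ≤ Φ t) (hzero : ∀ t, Φ t = 0 ↔ t = 0)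
    (hlim0 : Tendsto (fun t => Φ t / t) (nhdsWithin 0 (Set.Ioi 0)) (𝓝 0))
    (hliminf : Tendsto (fun t => Φ t / t) atTop atTop)
    (hDelta2 : ∃ K : ℝ, 1 < K ∧ ∀ t : ℝ, Φ (2 * t) ≤ K * Φ t)
    (hNabla2 : ∃ K' : ℝ, 1 < K' ∧ ∀ t : ℝ, 2 * K' * Φ t ≤ Φ (K' * t))
    (F : EuclideanSpace ℝ (Fin 3) → EuclideanSpace ℝ (Fin 3) → ℝ)
    (f : EuclideanSpace ℝ (Fin 3) → EuclideanSpace ℝ (Fin 3) → EuclideanSpace ℝ (Fin 3))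
    (hFmeas : ∀ u, Measurable (fun x => F x u))
    (hfmeas : ∀ u, Measurable (fun x => f x u))
    (hfcont : ∀ᵐ x, Continuous (f x))
    (hgrad : ∀ᵐ x, ∀ u, HasGradientAt (F x) (f x u) u)
    (hF0 : ∀ᵐ x, F x 0 = 0)
    (c₁ : ℝ) (hc₁ : 0 < c₁)
    (hgrowth : ∀ᵐ x, ∀ u, ‖f x u‖ ≤ c₁ * deriv Φ ‖u‖)
    (Eseq : ℕ → EuclideanSpace ℝ (Fin 3) → EuclideanSpace ℝ (Fin 3))
    (Elim : EuclideanSpace ℝ (Fin 3) → EuclideanSpace ℝ (Fin 3))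
    (hEmeas : ∀ n, Measurable (Eseq n)) (hElimmeas : Measurable Elim)
    (C : ℝ≥0∞) (hC : C < ⊤)
    (hbound : ∀ n, (∫⁻ x, ENNReal.ofReal (Φ ‖Eseq n x‖)) ≤ C)
    (hae : ∀ᵐ x, Tendsto (fun n => Eseq n x) atTop (𝓝 (Elim x))) :
    Tendsto (fun n => ∫ x, (F x (Eseq n x) - F x (Eseq n x - Elim x))) atTop
      (𝓝 (∫ x, F x (Elim x))) :=
  stmt3_general Φ hC1 hconv hnonneg hzero hDelta2 F f hFmeas hgrad hF0 c₁ hc₁ hgrowth Eseq Elim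
    hEmeas hElimmeas C hC hbound hae
end

section
/- Let Ω ⊂ ℝ³ be a measurable set of finite Lebesgue measure, and let Φ : ℝ → [0,∞) be continuous with Φ(0) = 0 and lim_{t→∞} Φ(t)/t⁶ = 0. Let (uₙ) be a sequence of measurable functions Ω → ℝ with sup_n ∫_Ω |uₙ|⁶ dx < ∞ and uₙ → 0 a.e. in Ω. Then ∫_Ω Φ(|uₙ|) dx → 0 as n → ∞. -/
/-!
Split `Φ(|u|)` at a height `M`. Above `M` the growth condition gives `Φ(t) ≤ δ t⁶`, so that part
of the integral is at most `δ C`. Below `M`, `Φ(min |u| M)` is bounded and tends to `0` almost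
everywhere, so its integral over the finite-measure set tends to `0` by dominated convergence.
Letting `δ → 0` gives the claim.
-/

open MeasureTheory Filter Topology
open scoped ENNReal NNReal

section

variable {α : Type*} [MeasurableSpace α] {μ : Measure α}

theorem eventually_le_mul_pow_of_tendsto_div_pow {Φ : ℝ → ℝ} {p : ℕ}
    (hlim : Tendsto (fun t => Φ t / t ^ p) atTop (𝓝 0)) {δ : ℝ} (hδ : 0 < δ) :
    ∃ M, ∀ t ≥ M, Φ t ≤ δ * t ^ p := by
  have hΦ : Φ =o[atTop] (fun t => t ^ p) := by
    refine (Asymptotics.isLittleO_iff_tendsto' ?_).2 hlim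
    filter_upwards [eventually_gt_atTop 0] with t ht hzero
    exact absurd hzero (pow_pos ht p).ne'
  obtain ⟨M, hM⟩ := eventually_atTop.1 ((hΦ.bound hδ).and (eventually_ge_atTop 0))
  refine ⟨M, fun t ht => ?_⟩
  obtain ⟨hbound, ht0⟩ := hM t ht
  rw [Real.norm_eq_abs, Real.norm_eq_abs, abs_of_nonneg (pow_nonneg ht0 p)] at hbound
  exact (le_abs_self _).trans hbound

theorem ofReal_le_mul_ofReal_pow_add_ofReal_min {Φ : ℝ → ℝ} {p : ℕ} {δ M : ℝ≥0}
    (hM : ∀ t ≥ (M : ℝ), Φ t ≤ δ * t ^ p) (t : ℝ) :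
    ENNReal.ofReal (Φ t) ≤ δ * ENNReal.ofReal (t ^ p) + ENNReal.ofReal (Φ (min t M)) := by
  rcases le_total t M with htM | hMt
  · rw [min_eq_left htM]
    exact le_add_self
  · calc ENNReal.ofReal (Φ t) ≤ ENNReal.ofReal (δ * t ^ p) := ENNReal.ofReal_le_ofReal (hM t hMt)
      _ = δ * ENNReal.ofReal (t ^ p) := by
        rw [ENNReal.ofReal_mul δ.coe_nonneg, ENNReal.ofReal_coe_nnreal]
      _ ≤ _ := le_self_add

theorem tendsto_lintegral_ofReal_comp_of_bddAbove [IsFiniteMeasure μ] {ψ : ℝ → ℝ}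
    (hcont : Continuous ψ) (hψ0 : ψ 0 = 0) (hbdd : BddAbove (Set.range ψ))
    {u : ℕ → α → ℝ} (hu : ∀ n, Measurable (u n))
    (hae : ∀ᵐ x ∂μ, Tendsto (fun n => u n x) atTop (𝓝 0)) :
    Tendsto (fun n => ∫⁻ x, ENNReal.ofReal (ψ (u n x)) ∂μ) atTop (𝓝 0) := by
  obtain ⟨K, hK⟩ := hbdd
  have hlim := tendsto_lintegral_of_dominated_convergence (μ := μ) (f := 0)
    (fun _ => ENNReal.ofReal K) (fun n => (hcont.measurable.comp (hu n)).ennreal_ofReal)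
    (fun n => .of_forall fun x => ENNReal.ofReal_le_ofReal (hK ⟨u n x, rfl⟩))
    (by simp [lintegral_const, ENNReal.mul_eq_top])
    (by
      filter_upwards [hae] with x hx
      simpa [hψ0, Function.comp_def] using
        (ENNReal.continuous_ofReal.tendsto _).comp ((hcont.tendsto 0).comp hx))
  simpa using hlim

theorem tendsto_lintegral_ofReal_comp_abs_of_tendsto_div_pow [IsFiniteMeasure μ] {Φ : ℝ → ℝ}
    (hcont : Continuous Φ) (hΦ0 : Φ 0 = 0) {p : ℕ}
    (hlim : Tendsto (fun t => Φ t / t ^ p) atTop (𝓝 0))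
    {u : ℕ → α → ℝ} (hu : ∀ n, Measurable (u n)) {C : ℝ≥0∞} (hC : C ≠ ⊤)
    (hbound : ∀ n, ∫⁻ x, ENNReal.ofReal (|u n x| ^ p) ∂μ ≤ C)
    (hae : ∀ᵐ x ∂μ, Tendsto (fun n => u n x) atTop (𝓝 0)) :
    Tendsto (fun n => ∫⁻ x, ENNReal.ofReal (Φ |u n x|) ∂μ) atTop (𝓝 0) := by
  rw [ENNReal.tendsto_nhds_zero]
  intro ε hε
  have hε2 : ε / 2 ≠ 0 := (ENNReal.half_pos hε.ne').ne'
  obtain ⟨δ, hδ, hδC⟩ := ENNReal.exists_nnreal_pos_mul_lt hC hε2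
  obtain ⟨M₀, hM₀⟩ := eventually_le_mul_pow_of_tendsto_div_pow hlim (NNReal.coe_pos.2 hδ)
  set M : ℝ≥0 := M₀.toNNReal
  have hM : ∀ t ≥ (M : ℝ), Φ t ≤ δ * t ^ p := fun t ht => hM₀ t ((M₀.le_coe_toNNReal).trans ht)
  set ψ : ℝ → ℝ := fun t => Φ (min |t| M)
  have hψbdd : BddAbove (Set.range ψ) := by
    refine (isCompact_Icc.bddAbove_image (f := Φ) (K := Set.Icc 0 (M : ℝ))
      hcont.continuousOn).mono ?_
    rintro _ ⟨t, rfl⟩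
    exact ⟨min |t| M, ⟨le_min (abs_nonneg t) M.2, min_le_right _ _⟩, rfl⟩
  have htrunc := tendsto_lintegral_ofReal_comp_of_bddAbove (μ := μ)
    (by fun_prop : Continuous ψ) (by simp [ψ, hΦ0]) hψbdd hu hae
  filter_upwards [ENNReal.tendsto_nhds_zero.1 htrunc (ε / 2) (pos_iff_ne_zero.2 hε2)] with n hn
  calc ∫⁻ x, ENNReal.ofReal (Φ |u n x|) ∂μ
      ≤ ∫⁻ x, (δ * ENNReal.ofReal (|u n x| ^ p) + ENNReal.ofReal (ψ (u n x))) ∂μ :=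
        lintegral_mono fun x => ofReal_le_mul_ofReal_pow_add_ofReal_min hM |u n x|
    _ = δ * ∫⁻ x, ENNReal.ofReal (|u n x| ^ p) ∂μ + ∫⁻ x, ENNReal.ofReal (ψ (u n x)) ∂μ := by
        rw [lintegral_add_left (by fun_prop), lintegral_const_mul _ (by fun_prop)]
    _ ≤ ε / 2 + ε / 2 := by
        gcongr
        exact (mul_le_mul_right (hbound n) _).trans hδC.le
    _ = ε := ENNReal.add_halves ε

end

theorem stmt7_general (Ω : Set (EuclideanSpace ℝ (Fin 3)))
    (hΩfin : volume Ω < ⊤)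
    (Φ : ℝ → ℝ) (hcont : Continuous Φ) (hΦ0 : Φ 0 = 0)
    (hlim : Tendsto (fun t => Φ t / t ^ 6) atTop (𝓝 0))
    (u : ℕ → EuclideanSpace ℝ (Fin 3) → ℝ) (hu : ∀ n, Measurable (u n))
    (C : ℝ≥0∞) (hC : C < ⊤)
    (hbound : ∀ n, (∫⁻ x in Ω, ENNReal.ofReal (|u n x| ^ 6)) ≤ C)
    (hae : ∀ᵐ x ∂(volume.restrict Ω), Tendsto (fun n => u n x) atTop (𝓝 0)) :
    Tendsto (fun n => ∫⁻ x in Ω, ENNReal.ofReal (Φ |u n x|)) atTop (𝓝 0) := by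
  have : IsFiniteMeasure (volume.restrict Ω) := isFiniteMeasure_restrict.2 hΩfin.ne
  exact tendsto_lintegral_ofReal_comp_abs_of_tendsto_div_pow hcont hΦ0 hlim hu hC.ne hbound hae

theorem stmt7 (Ω : Set (EuclideanSpace ℝ (Fin 3))) (hΩ : MeasurableSet Ω)
    (hΩfin : volume Ω < ⊤)
    (Φ : ℝ → ℝ) (hcont : Continuous Φ) (hΦ0 : Φ 0 = 0) (hnonneg : ∀ t, 0 ≤ Φ t)
    (hlim : Tendsto (fun t => Φ t / t ^ 6) atTop (𝓝 0))
    (u : ℕ → EuclideanSpace ℝ (Fin 3) → ℝ) (hu : ∀ n, Measurable (u n))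
    (C : ℝ≥0∞) (hC : C < ⊤)
    (hbound : ∀ n, (∫⁻ x in Ω, ENNReal.ofReal (|u n x| ^ 6)) ≤ C)
    (hae : ∀ᵐ x ∂(volume.restrict Ω), Tendsto (fun n => u n x) atTop (𝓝 0)) :
    Tendsto (fun n => ∫⁻ x in Ω, ENNReal.ofReal (Φ |u n x|)) atTop (𝓝 0) :=
  stmt7_general Ω hΩfin Φ hcont hΦ0 hlim u hu C hC hbound hae
end

section
/- Assume (I8). If u ∈ 𝒩, then u maximizes 𝒥 on the half-space ℝ⁺·u + ({0} × W): for every t ≥ 0 and every w ∈ W one has 𝒥(t·u + (0,w)) ≤ 𝒥(u). -/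
/-! On `𝒩` the two constraints say `ℐ'(u)[u] = ‖u⁺‖²` and `ℐ'(u)[(0,w)] = 0`. Substituting these into
(I8), its left-hand side becomes exactly `𝒥(t·u + (0,w)) - 𝒥(u)`. -/

open scoped RealInnerProductSpace

section HalfNormSqFstSub

variable {H W : Type*} [NormedAddCommGroup H] [InnerProductSpace ℝ H]
  [NormedAddCommGroup W] [NormedSpace ℝ W] {I : H × W → ℝ} {u : H × W}

theorem hasFDerivAt_half_norm_sq_fst_sub (hI : DifferentiableAt ℝ I u) :
    HasFDerivAt (fun y : H × W => 1 / 2 * ‖y.1‖ ^ 2 - I y)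
      ((innerSL ℝ u.1).comp (ContinuousLinearMap.fst ℝ H W) - fderiv ℝ I u) u := by
  have hsq := ((hasFDerivAt_fst (p := u)).norm_sq).const_mul (1 / 2 : ℝ)
  refine (hsq.sub hI.hasFDerivAt).congr_fderiv ?_
  ext x <;> simp

theorem fderiv_apply_eq_inner_of_fderiv_half_norm_sq_fst_sub_eq_zero
    (hI : DifferentiableAt ℝ I u) {x : H × W}
    (hx : fderiv ℝ (fun y : H × W => 1 / 2 * ‖y.1‖ ^ 2 - I y) u x = 0) :
    fderiv ℝ I u x = ⟪u.1, x.1⟫ := by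
  rw [(hasFDerivAt_half_norm_sq_fst_sub hI).fderiv] at hx
  simp only [sub_apply, ContinuousLinearMap.comp_apply,
    ContinuousLinearMap.coe_fst', innerSL_apply_apply] at hx
  linarith

end HalfNormSqFstSub

theorem stmt8_general
    {H W : Type*} [NormedAddCommGroup H] [InnerProductSpace ℝ H]
    [NormedAddCommGroup W] [NormedSpace ℝ W]
    (I : H × W → ℝ) (hIC1 : ContDiff ℝ 1 I)
    (J : H × W → ℝ) (hJ : ∀ u, J u = 1 / 2 * ‖u.1‖ ^ 2 - I u)
    (N : Set (H × W))
    (hN : N = {u : H × W | u.1 ≠ 0 ∧ fderiv ℝ J u u = 0 ∧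
      ∀ w : W, fderiv ℝ J u (0, w) = 0})
    (hI8 : ∀ u ∈ N, ∀ t : ℝ, 0 ≤ t → ∀ w : W,
      (t ^ 2 - 1) / 2 * fderiv ℝ I u u + t * fderiv ℝ I u (0, w) + I u -
          I (t • u + (0, w)) ≤ 0) :
    ∀ u ∈ N, ∀ t : ℝ, 0 ≤ t → ∀ w : W, J (t • u + (0, w)) ≤ J u := by
  intro u hu t ht w
  have key := hI8 u hu t ht w
  obtain rfl : J = fun y => 1 / 2 * ‖y.1‖ ^ 2 - I y := funext hJ
  obtain ⟨-, hJu, hJw⟩ := hN ▸ hu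
  have hIdiff := (hIC1.differentiable one_ne_zero) u
  rw [fderiv_apply_eq_inner_of_fderiv_half_norm_sq_fst_sub_eq_zero hIdiff hJu,
    fderiv_apply_eq_inner_of_fderiv_half_norm_sq_fst_sub_eq_zero hIdiff (hJw w),
    real_inner_self_eq_norm_sq, inner_zero_right] at key
  have hfst : (t • u + ((0 : H), w)).1 = t • u.1 := by simp
  simp only [hfst, norm_smul, Real.norm_of_nonneg ht]
  linarith

theorem stmt8
    {H W : Type*} [NormedAddCommGroup H] [InnerProductSpace ℝ H] [CompleteSpace H]
    [NormedAddCommGroup W] [NormedSpace ℝ W]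
    (I : H × W → ℝ) (hIC1 : ContDiff ℝ 1 I)
    (J : H × W → ℝ) (hJ : ∀ u, J u = 1 / 2 * ‖u.1‖ ^ 2 - I u)
    (N : Set (H × W))
    (hN : N = {u : H × W | u.1 ≠ 0 ∧ fderiv ℝ J u u = 0 ∧
      ∀ w : W, fderiv ℝ J u (0, w) = 0})
    (hI8 : ∀ u ∈ N, ∀ t : ℝ, 0 ≤ t → ∀ w : W,
      (t ^ 2 - 1) / 2 * fderiv ℝ I u u + t * fderiv ℝ I u (0, w) + I u -
          I (t • u + (0, w)) ≤ 0) :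
    ∀ u ∈ N, ∀ t : ℝ, 0 ≤ t → ∀ w : W, J (t • u + (0, w)) ≤ J u :=
  stmt8_general I hIC1 J hJ N hN hI8
end

section
/- Assume (I1)–(I5) and (I7), together with the stated properties of the map m and of 𝒥̃ := 𝒥 ∘ m. Let H_k be a finite-dimensional subspace of H. Then 𝒥̃(v) → −∞ whenever ‖v‖ → ∞ with v ∈ H_k. -/
/-!
On a finite-dimensional subspace every sequence with `‖vₙ‖ → ∞` has a subsequence whose
directions `vₙ / ‖vₙ‖` converge to a unit vector. Writing
`m vₙ = ‖vₙ‖ • (vₙ / ‖vₙ‖, w(vₙ) / ‖vₙ‖)`, condition (I7) gives `ℐ(m vₙ) / ‖vₙ‖² → ∞` along it,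
hence `𝒥̃ vₙ = ‖vₙ‖² (1/2 - ℐ(m vₙ) / ‖vₙ‖²) → -∞`.
-/

open Filter Topology Bornology

theorem tendsto_mul_norm_sq_sub_cobounded {E : Type*} [NormedAddCommGroup E] {g : E → ℝ} (c : ℝ)
    (hg : Tendsto (fun v => g v / ‖v‖ ^ 2) (cobounded E) atTop) :
    Tendsto (fun v => c * ‖v‖ ^ 2 - g v) (cobounded E) atBot := by
  have hsq : Tendsto (fun v : E => ‖v‖ ^ 2) (cobounded E) atTop :=
    (tendsto_pow_atTop two_ne_zero).comp tendsto_norm_cobounded_atTop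
  refine (hsq.atTop_mul_atBot₀ (tendsto_atBot_add_const_left _ c
    (tendsto_neg_atTop_atBot.comp hg))).congr' ?_
  filter_upwards [eventually_cobounded_le_norm 1] with v hv
  have : ‖v‖ ^ 2 ≠ 0 := by positivity
  simp only [Function.comp_apply]
  field_simp
  ring

section

variable {E F : Type*} [NormedAddCommGroup E] [NormedSpace ℝ E]
  [NormedAddCommGroup F] [NormedSpace ℝ F]

-- Condition (I7).
def IsSuperquadratic (I : E × F → ℝ) : Prop :=
  ∀ (t : ℕ → ℝ) (v : ℕ → E) (w : ℕ → F) (v₀ : E),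
    Tendsto t atTop atTop → Tendsto v atTop (𝓝 v₀) → v₀ ≠ 0 →
    Tendsto (fun n => I (t n • ((v n, w n) : E × F)) / t n ^ 2) atTop atTop

theorem exists_strictMono_tendsto_inv_norm_smul [ProperSpace E] {x : ℕ → E}
    (hx : Tendsto (‖x ·‖) atTop atTop) :
    ∃ s₀ : E, ‖s₀‖ = 1 ∧ ∃ φ : ℕ → ℕ, StrictMono φ ∧
      Tendsto (fun k => ‖x (φ k)‖⁻¹ • x (φ k)) atTop (𝓝 s₀) := by
  have hsphere : ∀ᶠ n in atTop, ‖x n‖⁻¹ • x n ∈ Metric.sphere (0 : E) 1 := by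
    filter_upwards [hx.eventually_gt_atTop 0] with n hn
    rw [mem_sphere_zero_iff_norm, norm_smul, norm_inv, norm_norm, inv_mul_cancel₀ hn.ne']
  obtain ⟨s₀, hs₀, φ, hφ, hlim⟩ := (isCompact_sphere (0 : E) 1).tendsto_subseq' hsphere.frequently
  exact ⟨s₀, mem_sphere_zero_iff_norm.1 hs₀, φ, hφ, hlim⟩

theorem IsSuperquadratic.tendsto_div_sq_of_smul {I : E × F → ℝ} (hI : IsSuperquadratic I)
    {m : E → E × F} (hm : ∀ v, (m v).1 = v) {t : ℕ → ℝ} {s : ℕ → E} {s₀ : E}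
    (ht : Tendsto t atTop atTop) (hs : Tendsto s atTop (𝓝 s₀)) (hs₀ : s₀ ≠ 0) :
    Tendsto (fun n => I (m (t n • s n)) / t n ^ 2) atTop atTop := by
  refine (hI t s (fun n => (t n)⁻¹ • (m (t n • s n)).2) s₀ ht hs hs₀).congr' ?_
  filter_upwards [ht.eventually_gt_atTop 0] with n hn
  have hgraph : t n • (s n, (t n)⁻¹ • (m (t n • s n)).2) = m (t n • s n) := by
    ext
    · simp [hm]
    · simp [smul_inv_smul₀ hn.ne']
  rw [hgraph]

theorem IsSuperquadratic.tendsto_div_sq_cobounded {I : E × F → ℝ} (hI : IsSuperquadratic I)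
    {m : E → E × F} (hm : ∀ v, (m v).1 = v) (K : Submodule ℝ E) [FiniteDimensional ℝ K] :
    Tendsto (fun v : K => I (m v) / ‖v‖ ^ 2) (cobounded K) atTop := by
  rw [← comap_norm_atTop]
  refine tendsto_of_subseq_tendsto fun x hx => ?_
  have hnorm : Tendsto (‖x ·‖) atTop atTop := tendsto_comap_iff.1 hx
  obtain ⟨s₀, hs₀, φ, hφ, hlim⟩ := exists_strictMono_tendsto_inv_norm_smul hnorm
  refine ⟨φ, ?_⟩
  have hnormφ := hnorm.comp hφ.tendsto_atTop
  have hs₀ne : (s₀ : E) ≠ 0 := by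
    rw [← norm_ne_zero_iff, Submodule.norm_coe, hs₀]; exact one_ne_zero
  refine (hI.tendsto_div_sq_of_smul hm hnormφ
    ((continuous_subtype_val.tendsto s₀).comp hlim) hs₀ne).congr' ?_
  filter_upwards [hnormφ.eventually_gt_atTop 0] with k hk
  have hk' : ‖(x (φ k) : E)‖ ≠ 0 := hk.ne'
  simp only [Function.comp_apply, Submodule.coe_smul, Submodule.coe_norm, smul_inv_smul₀ hk']

end

theorem stmt9_general
    {H W : Type*} [NormedAddCommGroup H] [InnerProductSpace ℝ H]
    [NormedAddCommGroup W] [NormedSpace ℝ W]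
    (I : H × W → ℝ)
    (J : H × W → ℝ) (hJ : ∀ u, J u = 1 / 2 * ‖u.1‖ ^ 2 - I u)
    (hI7 : ∀ (t : ℕ → ℝ) (v : ℕ → H) (w : ℕ → W) (v₀ : H),
      Tendsto t atTop atTop → Tendsto v atTop (𝓝 v₀) → v₀ ≠ 0 →
      Tendsto (fun n => I (t n • ((v n, w n) : H × W)) / t n ^ 2) atTop atTop)
    (m : H → H × W)
    (hm1 : ∀ v, (m v).1 = v)
    (Jt : H → ℝ) (hJtdef : ∀ v, Jt v = J (m v)) :
    ∀ Hk : Submodule ℝ H, FiniteDimensional ℝ Hk →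
      ∀ M : ℝ, ∃ R : ℝ, ∀ v : H, v ∈ Hk → R ≤ ‖v‖ → Jt v < M := by
  intro Hk hfin M
  have hJt : ∀ v, Jt v = 1 / 2 * ‖v‖ ^ 2 - I (m v) := fun v => by rw [hJtdef, hJ, hm1]
  have hlim : Tendsto (fun v : Hk => Jt v) (cobounded Hk) atBot := by
    simpa only [hJt, Submodule.coe_norm] using
      tendsto_mul_norm_sq_sub_cobounded (1 / 2)
        (IsSuperquadratic.tendsto_div_sq_cobounded hI7 hm1 Hk)
  obtain ⟨R, -, hR⟩ := hasBasis_cobounded_norm.eventually_iff.1 (hlim.eventually_lt_atBot M)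
  exact ⟨R, fun v hv hRv => hR (x := ⟨v, hv⟩) hRv⟩

theorem stmt9
    {H W : Type*} [NormedAddCommGroup H] [InnerProductSpace ℝ H] [CompleteSpace H]
    [NormedAddCommGroup W] [NormedSpace ℝ W]
    (hWweak : ∀ w : ℕ → W, (∃ C : ℝ, ∀ n, ‖w n‖ ≤ C) →
      ∃ (w₀ : W) (φ : ℕ → ℕ), StrictMono φ ∧
        ∀ ℓ : W →L[ℝ] ℝ, Tendsto (fun n => ℓ (w (φ n))) atTop (𝓝 (ℓ w₀)))
    (I : H × W → ℝ) (hIC1 : ContDiff ℝ 1 I)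
    (J : H × W → ℝ) (hJ : ∀ u, J u = 1 / 2 * ‖u.1‖ ^ 2 - I u)
    (hI1 : I 0 = 0 ∧ ∀ u, 0 ≤ I u)
    (hI2 : ∀ (v : ℕ → H) (w : ℕ → W) (v₀ : H) (w₀ : W),
      Tendsto v atTop (𝓝 v₀) →
      (∀ ℓ : W →L[ℝ] ℝ, Tendsto (fun n => ℓ (w n)) atTop (𝓝 (ℓ w₀))) →
      I (v₀, w₀) ≤ liminf (fun n => I (v n, w n)) atTop)
    (hI3 : ∀ (v : ℕ → H) (w : ℕ → W) (v₀ : H) (w₀ : W),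
      Tendsto v atTop (𝓝 v₀) →
      (∀ ℓ : W →L[ℝ] ℝ, Tendsto (fun n => ℓ (w n)) atTop (𝓝 (ℓ w₀))) →
      Tendsto (fun n => I (v n, w n)) atTop (𝓝 (I (v₀, w₀))) →
      Tendsto w atTop (𝓝 w₀))
    (hI4 : ∀ M : ℝ, ∃ R : ℝ, ∀ (v : H) (w : W),
      R ≤ Real.sqrt (‖v‖ ^ 2 + ‖w‖ ^ 2) → M ≤ ‖v‖ + I (v, w))
    (hI5 : ∀ u : H × W, (∀ w' : W, fderiv ℝ I u (0, w') = 0) →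
      ∀ w : W, w ≠ 0 → I u < I (u + (0, w)))
    (hI7 : ∀ (t : ℕ → ℝ) (v : ℕ → H) (w : ℕ → W) (v₀ : H),
      Tendsto t atTop atTop → Tendsto v atTop (𝓝 v₀) → v₀ ≠ 0 →
      Tendsto (fun n => I (t n • ((v n, w n) : H × W)) / t n ^ 2) atTop atTop)
    (m : H → H × W)
    (hm1 : ∀ v, (m v).1 = v)
    (hmM : ∀ v, ∀ w' : W, fderiv ℝ I (m v) (0, w') = 0)
    (hmmin : ∀ v w, I (m v) ≤ I (v, w))
    (hmuniq : ∀ (v : H) (w : W), (∀ w' : W, fderiv ℝ I (v, w) (0, w') = 0) → (v, w) = m v)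
    (hmcont : Continuous m)
    (Jt : H → ℝ) (hJtdef : ∀ v, Jt v = J (m v))
    (hJt' : ∀ v : H, HasFDerivAt Jt
      ((fderiv ℝ J (m v)).comp (ContinuousLinearMap.inl ℝ H W)) v) :
    ∀ Hk : Submodule ℝ H, FiniteDimensional ℝ Hk →
      ∀ M : ℝ, ∃ R : ℝ, ∀ v : H, v ∈ Hk → R ≤ ‖v‖ → Jt v < M :=
  stmt9_general I J hJ hI7 m hm1 Jt hJtdef
end

section
/- Assume (I1)–(I8). Define Γ := {γ : [0,1] → X continuous : γ(t) ∈ 𝓜 for all t, γ(0) = 0, ‖γ(1)⁺‖ > r and 𝒥(γ(1)) < 0} and c_𝓜 := inf_{γ∈Γ} sup_{t∈[0,1]} 𝒥(γ(t)). Then c_𝓜 = c_𝒩 := inf{𝒥(u) : u ∈ 𝒩}. -/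
/-!
Everything reduces to `H` through `Jt = J ∘ m`. The Nehari manifold `𝒩` is the image under `m`
of the Nehari set `{v ≠ 0 | Jt'(v) v = 0}` of `Jt`, and (I8) says that for `v` in this set `Jt v`
is the maximum of `Jt` on the ray `ℝ₊ v`. So for `u = m v ∈ 𝒩` the path `t ↦ m (t T v)`, with `T`
given by (I7), lies in `Γ` and stays below `J u`.

Conversely, the projection of a path in `Γ` meets the Nehari set of `Jt`. Otherwise its connected
image is covered by two open sets, met at `t = 0` and `t = 1`: the points of the ball of radius `r`
where `Jt < a`, together with those where `Jt` increases somewhere outwards along the ray, and the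
points where `Jt` increases somewhere inwards. At a common point the ray has an interior minimum,
which is a Nehari point lying below a higher point of its own ray.

Each value in either infimum thus dominates one in the other, which forces equality of the two
`sInf`s even when the sets are empty or unbounded below.
-/
open Filter Topology Set

section Nehari

variable {E : Type*} [NormedAddCommGroup E] [NormedSpace ℝ E] {f : E → ℝ} {a r : ℝ} {v : E}

def nehariSet (f : E → ℝ) : Set E := {v | v ≠ 0 ∧ fderiv ℝ f v v = 0}

theorem hasDerivAt_comp_smul {s : ℝ} (hf : DifferentiableAt ℝ f (s • v)) :
    HasDerivAt (fun t : ℝ => f (t • v)) (fderiv ℝ f (s • v) v) s := by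
  have := hf.hasFDerivAt.comp_hasDerivAt s ((hasDerivAt_id s).smul_const v)
  simpa [Function.comp_def] using this

theorem smul_mem_nehariSet_of_isLocalExtr {s : ℝ} (hf : DifferentiableAt ℝ f (s • v))
    (hv : v ≠ 0) (hs : s ≠ 0) (hext : IsLocalExtr (fun t : ℝ => f (t • v)) s) :
    s • v ∈ nehariSet f := by
  refine ⟨smul_ne_zero hs hv, ?_⟩
  rw [map_smul, hext.hasDerivAt_eq_zero (hasDerivAt_comp_smul hf), smul_zero]

theorem isOpen_setOf_exists_lt_comp_smul (hf : Continuous f) (S : Set ℝ) :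
    IsOpen {v | ∃ s ∈ S, f v < f (s • v)} := by
  have : {v | ∃ s ∈ S, f v < f (s • v)} = ⋃ s ∈ S, {v | f v < f (s • v)} := by ext; simp
  rw [this]
  exact isOpen_biUnion fun s _ => isOpen_lt hf (hf.comp (continuous_const_smul s))

theorem exists_lt_comp_smul_of_notMem_nehariSet (hf : DifferentiableAt ℝ f v) (hv : v ≠ 0)
    (hN : v ∉ nehariSet f) :
    (∃ s ∈ Ioi (1 : ℝ), f v < f (s • v)) ∨ ∃ s ∈ Ioo (0 : ℝ) 1, f v < f (s • v) := by
  by_contra! h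
  have hmax : IsLocalMax (fun t : ℝ => f (t • v)) 1 := by
    filter_upwards [Ioi_mem_nhds one_pos] with t ht
    rcases lt_trichotomy t 1 with h₁ | rfl | h₁
    · simpa using h.2 t ⟨ht, h₁⟩
    · exact le_rfl
    · simpa using h.1 t h₁
  have := smul_mem_nehariSet_of_isLocalExtr (by simpa using hf) hv one_ne_zero (Or.inr hmax)
  exact hN (by simpa using this)

theorem le_comp_div_norm_smul (hsphere : ∀ v, ‖v‖ = r → a ≤ f v) (hr : 0 ≤ r) (hv : v ≠ 0) :
    a ≤ f ((r / ‖v‖) • v) :=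
  hsphere _ <| by
    rw [norm_smul_of_nonneg (div_nonneg hr (norm_nonneg v)),
      div_mul_cancel₀ _ (norm_ne_zero_iff.2 hv)]

/-- A minimum of `t ↦ f (t • v)` on `[s₁, s₂]` is interior, hence a point of the Nehari set whose
ray reaches the higher value `f (s₁ • v)`. -/
theorem not_lt_comp_smul_and_lt_comp_smul (hf : Differentiable ℝ f)
    (hray : ∀ v ∈ nehariSet f, ∀ s : ℝ, 0 ≤ s → f (s • v) ≤ f v) {s₁ s₂ : ℝ}
    (hs₁ : s₁ ∈ Ioo 0 1) (hs₂ : 1 < s₂) (h₁ : f v < f (s₁ • v)) (h₂ : f v < f (s₂ • v)) :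
    False := by
  have hv : v ≠ 0 := by rintro rfl; simp at h₁
  obtain ⟨s₀, hs₀, hmin⟩ := isCompact_Icc.exists_isMinOn (nonempty_Icc.2 (hs₁.2.trans hs₂).le)
    (hf.continuous.comp (continuous_id.smul continuous_const)).continuousOn
  have hle : f (s₀ • v) ≤ f v := by simpa using hmin ⟨hs₁.2.le, hs₂.le⟩
  have hs₀' : s₀ ∈ Ioo s₁ s₂ := by
    refine ⟨hs₀.1.lt_of_ne ?_, hs₀.2.lt_of_ne ?_⟩ <;> rintro rfl <;> linarith
  have hs₀pos : 0 < s₀ := hs₁.1.trans hs₀'.1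
  have hN := smul_mem_nehariSet_of_isLocalExtr (hf _) hv hs₀pos.ne'
    (Or.inl (hmin.isLocalMin (Icc_mem_nhds hs₀'.1 hs₀'.2)))
  have := hray _ hN (s₁ / s₀) (div_pos hs₁.1 hs₀pos).le
  rw [smul_smul, div_mul_cancel₀ _ hs₀pos.ne'] at this
  linarith

theorem IsPreconnected.inter_nehariSet_nonempty (hf : Differentiable ℝ f)
    (hray : ∀ v ∈ nehariSet f, ∀ s : ℝ, 0 ≤ s → f (s • v) ≤ f v)
    (hsphere : ∀ v, ‖v‖ = r → a ≤ f v) (hr : 0 < r) (hf0 : f 0 < a) {K : Set E}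
    (hK : IsPreconnected K) (h0 : 0 ∈ K) {p : E} (hp : p ∈ K) (hpr : r < ‖p‖) (hpa : f p < a) :
    (K ∩ nehariSet f).Nonempty := by
  by_contra hKN
  let U := {v | ‖v‖ < r ∧ f v < a} ∪ {v | ∃ s ∈ Ioi (1 : ℝ), f v < f (s • v)}
  let V := {v | ∃ s ∈ Ioo (0 : ℝ) 1, f v < f (s • v)}
  have hU : IsOpen U := ((isOpen_lt continuous_norm continuous_const).inter
    (isOpen_lt hf.continuous continuous_const)).union
    (isOpen_setOf_exists_lt_comp_smul hf.continuous _)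
  have hcover : K ⊆ U ∪ V := by
    intro v hvK
    by_cases hv : v = 0
    · subst hv; exact Or.inl (Or.inl ⟨by simpa using hr, hf0⟩)
    · rcases exists_lt_comp_smul_of_notMem_nehariSet (hf v) hv fun hN => hKN ⟨v, hvK, hN⟩ with h | h
      exacts [Or.inl (Or.inr h), Or.inr h]
  have hp0 : 0 < ‖p‖ := hr.trans hpr
  have hpV : p ∈ V := ⟨r / ‖p‖, ⟨by positivity, (div_lt_one hp0).2 hpr⟩,
    hpa.trans_le (le_comp_div_norm_smul hsphere hr.le (norm_pos_iff.1 hp0))⟩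
  obtain ⟨v, -, hvU, s₁, hs₁, h₁⟩ := hK U V hU (isOpen_setOf_exists_lt_comp_smul hf.continuous _)
    hcover ⟨0, h0, Or.inl ⟨by simpa using hr, hf0⟩⟩ ⟨p, hp, hpV⟩
  have hv : v ≠ 0 := by rintro rfl; simp at h₁
  obtain ⟨s₂, hs₂, h₂⟩ : ∃ s ∈ Ioi (1 : ℝ), f v < f (s • v) := by
    rcases hvU with ⟨hvr, hva⟩ | h
    · have hv0 : 0 < ‖v‖ := norm_pos_iff.2 hv
      exact ⟨r / ‖v‖, (one_lt_div hv0).2 hvr, hva.trans_le (le_comp_div_norm_smul hsphere hr.le hv)⟩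
    · exact h
  exact not_lt_comp_smul_and_lt_comp_smul hf hray hs₁ hs₂ h₁ h₂

theorem exists_mem_nehariSet_le_iSup (hf : Differentiable ℝ f)
    (hray : ∀ v ∈ nehariSet f, ∀ s : ℝ, 0 ≤ s → f (s • v) ≤ f v)
    (hsphere : ∀ v, ‖v‖ = r → a ≤ f v) (hr : 0 < r) (hf0 : f 0 < a) {σ : ℝ → E}
    (hσ : ContinuousOn σ (Icc 0 1)) (hσ0 : σ 0 = 0) (hσr : r < ‖σ 1‖) (hσa : f (σ 1) < a) :
    ∃ v ∈ nehariSet f, f v ≤ ⨆ t : Icc (0 : ℝ) 1, f (σ t) := by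
  obtain ⟨_, ⟨t, ht, rfl⟩, hN⟩ := (isPreconnected_Icc.image σ hσ).inter_nehariSet_nonempty hf
    hray hsphere hr hf0 ⟨0, left_mem_Icc.2 zero_le_one, hσ0⟩ ⟨1, right_mem_Icc.2 zero_le_one, rfl⟩
    hσr hσa
  refine ⟨σ t, hN, le_ciSup (f := fun s : Icc (0 : ℝ) 1 => f (σ s)) ?_ ⟨t, ht⟩⟩
  have hbdd := isCompact_Icc.bddAbove_image (hf.continuous.comp_continuousOn hσ)
  rwa [image_eq_range] at hbdd

end Nehari

section Reduction

variable {H W : Type*} [NormedAddCommGroup H] [NormedAddCommGroup W] {I J : H × W → ℝ}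
  {m : H → H × W}

theorem le_energy_of_norm_eq {a r : ℝ} (hJ : ∀ u, J u = 1 / 2 * ‖u.1‖ ^ 2 - I u)
    (hm1 : ∀ v, (m v).1 = v) (hmmin : ∀ v w, I (m v) ≤ I (v, w))
    (hI6 : ∀ v : H, ‖v‖ = r → a ≤ J (v, 0)) {v : H} (hv : ‖v‖ = r) : a ≤ J (m v) := by
  have h6 := hI6 v hv
  rw [hJ] at h6 ⊢
  rw [hm1]
  linarith [hmmin v 0]

variable [InnerProductSpace ℝ H] [NormedSpace ℝ W]

def nehariManifold (I J : H × W → ℝ) : Set (H × W) :=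
  {u | u.1 ≠ 0 ∧ fderiv ℝ J u u = 0 ∧ ∀ w' : W, fderiv ℝ I u (0, w') = 0}

theorem fderiv_apply_eq_inner_sub (hI : Differentiable ℝ I)
    (hJ : ∀ u, J u = 1 / 2 * ‖u.1‖ ^ 2 - I u) (u x : H × W) :
    fderiv ℝ J u x = inner ℝ u.1 x.1 - fderiv ℝ I u x := by
  have h := (((hasStrictFDerivAt_norm_sq u.1).hasFDerivAt.comp u hasFDerivAt_fst).const_mul
    (1 / 2 : ℝ)).sub (hI u).hasFDerivAt
  rw [(h.congr_of_eventuallyEq (Eventually.of_forall hJ)).fderiv]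
  simp

theorem fderiv_comp_inl_apply_self {Jt : H → ℝ} (hI : Differentiable ℝ I)
    (hJ : ∀ u, J u = 1 / 2 * ‖u.1‖ ^ 2 - I u) (hm1 : ∀ v, (m v).1 = v)
    (hmM : ∀ v, ∀ w' : W, fderiv ℝ I (m v) (0, w') = 0)
    (hJt' : ∀ v, HasFDerivAt Jt ((fderiv ℝ J (m v)).comp (ContinuousLinearMap.inl ℝ H W)) v)
    (v : H) : fderiv ℝ Jt v v = fderiv ℝ J (m v) (m v) := by
  have hsplit : m v = (v, 0) + (0, (m v).2) := by ext <;> simp [hm1]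
  have hW : fderiv ℝ J (m v) (0, (m v).2) = 0 := by simp [fderiv_apply_eq_inner_sub hI hJ, hmM]
  rw [(hJt' v).fderiv, congrArg (fderiv ℝ J (m v)) hsplit, map_add, hW, add_zero]
  rfl

theorem nehariManifold_eq_image_nehariSet {Jt : H → ℝ} (hI : Differentiable ℝ I)
    (hJ : ∀ u, J u = 1 / 2 * ‖u.1‖ ^ 2 - I u) (hm1 : ∀ v, (m v).1 = v)
    (hmM : ∀ v, ∀ w' : W, fderiv ℝ I (m v) (0, w') = 0)
    (hmuniq : ∀ v w, (∀ w' : W, fderiv ℝ I (v, w) (0, w') = 0) → (v, w) = m v)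
    (hJt' : ∀ v, HasFDerivAt Jt ((fderiv ℝ J (m v)).comp (ContinuousLinearMap.inl ℝ H W)) v) :
    nehariManifold I J = m '' nehariSet Jt := by
  have hderiv := fderiv_comp_inl_apply_self hI hJ hm1 hmM hJt'
  ext u
  constructor
  · rintro ⟨hu, hcrit, hfib⟩
    have hu_eq : m u.1 = u := (hmuniq u.1 u.2 hfib).symm
    exact ⟨u.1, ⟨hu, by rw [hderiv, hu_eq, hcrit]⟩, hu_eq⟩
  · rintro ⟨v, ⟨hv, hcrit⟩, rfl⟩
    exact ⟨by rwa [hm1], by rwa [← hderiv], hmM v⟩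

-- (I8) at `u = m v` with `t = s` and `w = w(s v) - s w(v)`, so that `t • u + (0, w) = m (s • v)`.
theorem energy_smul_le_of_mem_nehariManifold (hI : Differentiable ℝ I)
    (hJ : ∀ u, J u = 1 / 2 * ‖u.1‖ ^ 2 - I u) (hm1 : ∀ v, (m v).1 = v)
    (hI8 : ∀ u : H × W, u.1 ≠ 0 → fderiv ℝ J u u = 0 →
      (∀ w' : W, fderiv ℝ I u (0, w') = 0) →
      ∀ t : ℝ, 0 ≤ t → ∀ w : W,
        (t ^ 2 - 1) / 2 * fderiv ℝ I u u + t * fderiv ℝ I u (0, w) + I u -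
            I (t • u + (0, w)) ≤ 0)
    {v : H} (hv : m v ∈ nehariManifold I J) {s : ℝ} (hs : 0 ≤ s) :
    J (m (s • v)) ≤ J (m v) := by
  obtain ⟨hv0, hcrit, hfib⟩ := hv
  have hIvv : fderiv ℝ I (m v) (m v) = ‖v‖ ^ 2 := by
    rw [fderiv_apply_eq_inner_sub hI hJ, real_inner_self_eq_norm_sq, hm1] at hcrit
    linarith
  have hlift : s • m v + (0, (m (s • v)).2 - s • (m v).2) = m (s • v) := by
    ext <;> simp [hm1]
  have h8 := hI8 (m v) hv0 hcrit hfib s hs ((m (s • v)).2 - s • (m v).2)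
  rw [hlift, hfib, hIvv] at h8
  rw [hJ, hJ, hm1, hm1, norm_smul, mul_pow, Real.norm_eq_abs, sq_abs]
  nlinarith

theorem exists_energy_smul_neg (hJ : ∀ u, J u = 1 / 2 * ‖u.1‖ ^ 2 - I u)
    (hm1 : ∀ v, (m v).1 = v)
    (hI7 : ∀ (t : ℕ → ℝ) (v : ℕ → H) (w : ℕ → W) (v₀ : H),
      Tendsto t atTop atTop → Tendsto v atTop (𝓝 v₀) → v₀ ≠ 0 →
      Tendsto (fun n => I (t n • ((v n, w n) : H × W)) / t n ^ 2) atTop atTop)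
    {v : H} (hv : v ≠ 0) (R : ℝ) : ∃ T > 0, R < T * ‖v‖ ∧ J (m (T • v)) < 0 := by
  have hI7' : Tendsto (fun n : ℕ => I (m ((n : ℝ) • v)) / (n : ℝ) ^ 2) atTop atTop := by
    refine (hI7 _ _ (fun n => (n : ℝ)⁻¹ • (m ((n : ℝ) • v)).2) v tendsto_natCast_atTop_atTop
      tendsto_const_nhds hv).congr' ?_
    filter_upwards [eventually_ne_atTop 0] with n hn
    congr 2
    ext <;> simp [hm1, smul_smul, hn]
  obtain ⟨n, hIn, hn1, hnR⟩ := ((hI7'.eventually_gt_atTop (1 / 2 * ‖v‖ ^ 2)).and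
    ((eventually_ge_atTop 1).and ((tendsto_natCast_atTop_atTop.atTop_mul_const
      (norm_pos_iff.2 hv)).eventually_gt_atTop R))).exists
  have hn : (0 : ℝ) < n := by exact_mod_cast hn1
  refine ⟨n, hn, hnR, ?_⟩
  rw [lt_div_iff₀ (by positivity)] at hIn
  rw [hJ, hm1, norm_smul, mul_pow, Real.norm_eq_abs, sq_abs]
  linarith

theorem apply_zero_eq_zero_of_isMinOn (hmin : IsMinOn I univ 0)
    (hmuniq : ∀ v w, (∀ w' : W, fderiv ℝ I (v, w) (0, w') = 0) → (v, w) = m v) : m 0 = 0 :=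
  (hmuniq 0 0 fun w' => by
    rw [Prod.mk_zero_zero, (hmin.isLocalMin univ_mem).fderiv_eq_zero]; rfl).symm

end Reduction

theorem stmt12_general
    {H W : Type*} [NormedAddCommGroup H] [InnerProductSpace ℝ H]
    [NormedAddCommGroup W] [NormedSpace ℝ W]
    (I : H × W → ℝ) (hIC1 : ContDiff ℝ 1 I)
    (J : H × W → ℝ) (hJ : ∀ u, J u = 1 / 2 * ‖u.1‖ ^ 2 - I u)
    (hI1 : I 0 = 0 ∧ ∀ u, 0 ≤ I u)
    (r a : ℝ) (hr : 0 < r) (ha : 0 < a)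
    (hI6 : ∀ v : H, ‖v‖ = r → a ≤ J (v, 0))
    (hI7 : ∀ (t : ℕ → ℝ) (v : ℕ → H) (w : ℕ → W) (v₀ : H),
      Tendsto t atTop atTop → Tendsto v atTop (𝓝 v₀) → v₀ ≠ 0 →
      Tendsto (fun n => I (t n • ((v n, w n) : H × W)) / t n ^ 2) atTop atTop)
    (hI8 : ∀ u : H × W, u.1 ≠ 0 → fderiv ℝ J u u = 0 →
      (∀ w' : W, fderiv ℝ I u (0, w') = 0) →
      ∀ t : ℝ, 0 ≤ t → ∀ w : W,
        (t ^ 2 - 1) / 2 * fderiv ℝ I u u + t * fderiv ℝ I u (0, w) + I u -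
            I (t • u + (0, w)) ≤ 0)
    (m : H → H × W)
    (hm1 : ∀ v, (m v).1 = v)
    (hmM : ∀ v, ∀ w' : W, fderiv ℝ I (m v) (0, w') = 0)
    (hmmin : ∀ v w, I (m v) ≤ I (v, w))
    (hmuniq : ∀ (v : H) (w : W), (∀ w' : W, fderiv ℝ I (v, w) (0, w') = 0) → (v, w) = m v)
    (hmcont : Continuous m)
    (Jt : H → ℝ) (hJtdef : ∀ v, Jt v = J (m v))
    (hJt' : ∀ v : H, HasFDerivAt Jt
      ((fderiv ℝ J (m v)).comp (ContinuousLinearMap.inl ℝ H W)) v)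
    (Γ : Set (ℝ → H × W))
    (hΓ : Γ = {γ : ℝ → H × W | ContinuousOn γ (Set.Icc 0 1) ∧
      (∀ t ∈ Set.Icc (0:ℝ) 1, ∀ w' : W, fderiv ℝ I (γ t) (0, w') = 0) ∧
      γ 0 = 0 ∧ r < ‖(γ 1).1‖ ∧ J (γ 1) < 0})
    (c : ℝ) (hc : c = ⨅ γ : Γ, ⨆ t : Set.Icc (0:ℝ) 1, J (γ.1 t.1))
    :
    c = sInf (J '' {u : H × W | u.1 ≠ 0 ∧ fderiv ℝ J u u = 0 ∧
      ∀ w' : W, fderiv ℝ I u (0, w') = 0}) := by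
  obtain ⟨hI0, hInn⟩ := hI1
  have hIdiff : Differentiable ℝ I := hIC1.differentiable one_ne_zero
  have hJt : Differentiable ℝ Jt := fun v => (hJt' v).differentiableAt
  have hN := nehariManifold_eq_image_nehariSet hIdiff hJ hm1 hmM hmuniq hJt'
  have hray : ∀ v ∈ nehariSet Jt, ∀ s : ℝ, 0 ≤ s → Jt (s • v) ≤ Jt v := fun v hv s hs => by
    simpa only [hJtdef] using
      energy_smul_le_of_mem_nehariManifold hIdiff hJ hm1 hI8 (hN ▸ mem_image_of_mem m hv) hs
  have hsphere : ∀ v : H, ‖v‖ = r → a ≤ Jt v := fun v hv =>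
    hJtdef v ▸ le_energy_of_norm_eq hJ hm1 hmmin hI6 hv
  have hm0 : m 0 = 0 := apply_zero_eq_zero_of_isMinOn (fun u _ => hI0 ▸ hInn u) hmuniq
  have hJt0 : Jt 0 = 0 := by simp [hJtdef, hm0, hJ, hI0]
  change c = sInf (J '' nehariManifold I J)
  rw [hc, hN, image_image, ← funext hJtdef]
  refine csInf_eq_csInf_of_forall_exists_le ?_ ?_
  · rintro _ ⟨⟨γ, hγ⟩, rfl⟩
    obtain ⟨hcont, hγM, hγ0, hγr, hγJ⟩ := hΓ ▸ hγ
    have hγm : ∀ t ∈ Icc (0 : ℝ) 1, Jt (γ t).1 = J (γ t) := fun t ht => by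
      rw [hJtdef, ← hmuniq _ _ (hγM t ht)]
    obtain ⟨v, hv, hle⟩ := exists_mem_nehariSet_le_iSup hJt hray hsphere hr (hJt0.trans_lt ha)
      (continuous_fst.comp_continuousOn hcont) (by simp [hγ0]) hγr
      (by rw [Function.comp_apply, hγm 1 (right_mem_Icc.2 zero_le_one)]; linarith)
    exact ⟨Jt v, mem_image_of_mem _ hv, hle.trans_eq (iSup_congr fun t => hγm t t.2)⟩
  · rintro _ ⟨v, hv, rfl⟩
    obtain ⟨T, hT, hTr, hTneg⟩ := exists_energy_smul_neg hJ hm1 hI7 hv.1 r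
    have hγ : (fun t : ℝ => m ((t * T) • v)) ∈ Γ := hΓ ▸
      ⟨(hmcont.comp (by fun_prop)).continuousOn, fun t _ => hmM _, by simp [hm0],
        by simpa [hm1, norm_smul, abs_of_pos hT] using hTr, by simpa using hTneg⟩
    exact ⟨_, ⟨⟨_, hγ⟩, rfl⟩, ciSup_le fun t => (hJtdef _).symm.trans_le
      (hray v hv _ (mul_nonneg t.2.1 hT.le))⟩

theorem stmt12
    {H W : Type*} [NormedAddCommGroup H] [InnerProductSpace ℝ H] [CompleteSpace H]
    [NormedAddCommGroup W] [NormedSpace ℝ W]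
    (hWweak : ∀ w : ℕ → W, (∃ C : ℝ, ∀ n, ‖w n‖ ≤ C) →
      ∃ (w₀ : W) (φ : ℕ → ℕ), StrictMono φ ∧
        ∀ ℓ : W →L[ℝ] ℝ, Tendsto (fun n => ℓ (w (φ n))) atTop (𝓝 (ℓ w₀)))
    (I : H × W → ℝ) (hIC1 : ContDiff ℝ 1 I)
    (J : H × W → ℝ) (hJ : ∀ u, J u = 1 / 2 * ‖u.1‖ ^ 2 - I u)
    (hI1 : I 0 = 0 ∧ ∀ u, 0 ≤ I u)
    (hI2 : ∀ (v : ℕ → H) (w : ℕ → W) (v₀ : H) (w₀ : W),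
      Tendsto v atTop (𝓝 v₀) →
      (∀ ℓ : W →L[ℝ] ℝ, Tendsto (fun n => ℓ (w n)) atTop (𝓝 (ℓ w₀))) →
      I (v₀, w₀) ≤ liminf (fun n => I (v n, w n)) atTop)
    (hI3 : ∀ (v : ℕ → H) (w : ℕ → W) (v₀ : H) (w₀ : W),
      Tendsto v atTop (𝓝 v₀) →
      (∀ ℓ : W →L[ℝ] ℝ, Tendsto (fun n => ℓ (w n)) atTop (𝓝 (ℓ w₀))) →
      Tendsto (fun n => I (v n, w n)) atTop (𝓝 (I (v₀, w₀))) →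
      Tendsto w atTop (𝓝 w₀))
    (hI4 : ∀ M : ℝ, ∃ R : ℝ, ∀ (v : H) (w : W),
      R ≤ Real.sqrt (‖v‖ ^ 2 + ‖w‖ ^ 2) → M ≤ ‖v‖ + I (v, w))
    (hI5 : ∀ u : H × W, (∀ w' : W, fderiv ℝ I u (0, w') = 0) →
      ∀ w : W, w ≠ 0 → I u < I (u + (0, w)))
    (r a : ℝ) (hr : 0 < r) (ha : 0 < a)
    (hI6 : ∀ v : H, ‖v‖ = r → a ≤ J (v, 0))
    (hI7 : ∀ (t : ℕ → ℝ) (v : ℕ → H) (w : ℕ → W) (v₀ : H),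
      Tendsto t atTop atTop → Tendsto v atTop (𝓝 v₀) → v₀ ≠ 0 →
      Tendsto (fun n => I (t n • ((v n, w n) : H × W)) / t n ^ 2) atTop atTop)
    (hI8 : ∀ u : H × W, u.1 ≠ 0 → fderiv ℝ J u u = 0 →
      (∀ w' : W, fderiv ℝ I u (0, w') = 0) →
      ∀ t : ℝ, 0 ≤ t → ∀ w : W,
        (t ^ 2 - 1) / 2 * fderiv ℝ I u u + t * fderiv ℝ I u (0, w) + I u -
            I (t • u + (0, w)) ≤ 0)
    (m : H → H × W)
    (hm1 : ∀ v, (m v).1 = v)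
    (hmM : ∀ v, ∀ w' : W, fderiv ℝ I (m v) (0, w') = 0)
    (hmmin : ∀ v w, I (m v) ≤ I (v, w))
    (hmuniq : ∀ (v : H) (w : W), (∀ w' : W, fderiv ℝ I (v, w) (0, w') = 0) → (v, w) = m v)
    (hmcont : Continuous m)
    (Jt : H → ℝ) (hJtdef : ∀ v, Jt v = J (m v))
    (hJt' : ∀ v : H, HasFDerivAt Jt
      ((fderiv ℝ J (m v)).comp (ContinuousLinearMap.inl ℝ H W)) v)
    (Γ : Set (ℝ → H × W))
    (hΓ : Γ = {γ : ℝ → H × W | ContinuousOn γ (Set.Icc 0 1) ∧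
      (∀ t ∈ Set.Icc (0:ℝ) 1, ∀ w' : W, fderiv ℝ I (γ t) (0, w') = 0) ∧
      γ 0 = 0 ∧ r < ‖(γ 1).1‖ ∧ J (γ 1) < 0})
    (c : ℝ) (hc : c = ⨅ γ : Γ, ⨆ t : Set.Icc (0:ℝ) 1, J (γ.1 t.1))
    :
    c = sInf (J '' {u : H × W | u.1 ≠ 0 ∧ fderiv ℝ J u u = 0 ∧
      ∀ w' : W, fderiv ℝ I u (0, w') = 0}) :=
  stmt12_general I hIC1 J hJ hI1 r a hr ha hI6 hI7 hI8 m hm1 hmM hmmin hmuniq hmcont Jt hJtdef hJt'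
    Γ hΓ c hc
end
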